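/- arXiv:1510.06260 — 5 statements merged into one kernel-verified Lean document; each statement's English description precedes it below -/
import Mathlib

section
/- Let (X,Y) be a random couple of real numbers and (X̄,Ȳ) an independent copy of (X,Y). Assume the law of Y has a density ρ_Y with respect to Lebesgue measure with ‖ρ_Y‖_∞ < ∞. Then E[|K(X - X̄) - K(Y - Ȳ)|] ≤ 8 ‖ρ_Y‖_∞ E[|X - Y|], where K(x) = (1/2)sign(x). -/
/-!
Since `X - X̄ = (Y - Ȳ) + (X - Y) - (X̄ - Ȳ)`, the kernel values `K (X - X̄)` and `K (Y - Ȳ)`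
can only differ when `|Y - Ȳ| ≤ 2 |X - Y|` or `|Y - Ȳ| ≤ 2 |X̄ - Ȳ|`, while `|K a - K b| ≤ 1` always.
In the first event `Ȳ` is independent of `(X, Y)` and must land in an interval of length
`4 |X - Y|` around `Y`, which has probability at most `4 M E|X - Y|`; the second event is the
same with the roles of the two copies exchanged.
-/

open MeasureTheory ProbabilityTheory

noncomputable def K (x : ℝ) : ℝ := Real.sign x / 2

lemma abs_K_le_half (x : ℝ) : |K x| ≤ 1 / 2 := by
  rcases Real.sign_apply_eq x with h | h | h <;> norm_num [K, h]

lemma abs_K_sub_K_le_one (a b : ℝ) : |K a - K b| ≤ 1 := by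
  linarith [abs_sub (K a) (K b), abs_K_le_half a, abs_K_le_half b]

lemma abs_le_abs_sub_of_K_ne {a b : ℝ} (h : K a ≠ K b) : |b| ≤ |a - b| := by
  rcases lt_trichotomy b 0 with hb | rfl | hb
  · have ha : 0 ≤ a := by
      by_contra! ha
      exact h (by simp [K, Real.sign_of_neg ha, Real.sign_of_neg hb])
    rw [abs_of_neg hb, abs_of_nonneg (by linarith)]
    linarith
  · simp
  · have ha : a ≤ 0 := by
      by_contra! ha
      exact h (by simp [K, Real.sign_of_pos ha, Real.sign_of_pos hb])
    rw [abs_of_pos hb, abs_of_nonpos (by linarith)]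
    linarith

lemma abs_le_two_mul_or_of_K_ne {a b s t : ℝ} (h : K a ≠ K b) (hab : a - b = s - t) :
    |b| ≤ 2 * |s| ∨ |b| ≤ 2 * |t| := by
  have hb := abs_le_abs_sub_of_K_ne h
  rw [hab] at hb
  by_contra!
  linarith [abs_sub s t]

lemma nonneg_of_ae_le_of_withDensity_ne_zero {α : Type*} [MeasurableSpace α] {ν : Measure α}
    {ρ : α → ℝ} {M : ℝ} (hρ : ν.withDensity (fun y => ENNReal.ofReal (ρ y)) ≠ 0)
    (hM : ∀ᵐ y ∂ν, ρ y ≤ M) : 0 ≤ M := by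
  by_contra! hM0
  refine hρ ?_
  rw [← withDensity_zero]
  refine withDensity_congr_ae ?_
  filter_upwards [hM] with y hy
  simp [ENNReal.ofReal_eq_zero.2 (hy.trans hM0.le)]

section BoundedDensity

variable {ρ : ℝ → ℝ} {M : ℝ}

lemma withDensity_closedBall_le (hM : ∀ᵐ y, ρ y ≤ M) (c r : ℝ) :
    volume.withDensity (fun y => ENNReal.ofReal (ρ y)) (Metric.closedBall c r)
      ≤ ENNReal.ofReal M * ENNReal.ofReal (2 * r) := by
  rw [withDensity_apply _ Metric.isClosed_closedBall.measurableSet, ← Real.volume_closedBall c r,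
    ← setLIntegral_const]
  refine lintegral_mono_ae ?_
  filter_upwards [ae_restrict_of_ae hM] with y hy
  exact ENNReal.ofReal_le_ofReal hy

lemma prod_withDensity_le {α : Type*} [MeasurableSpace α] (ν : Measure α)
    (hM : ∀ᵐ y, ρ y ≤ M) {f g : α → ℝ} (hf : Measurable f) (hg : Measurable g) :
    ν.prod (volume.withDensity fun y => ENNReal.ofReal (ρ y)) {p | dist p.2 (f p.1) ≤ g p.1}
      ≤ ENNReal.ofReal M * ∫⁻ x, ENNReal.ofReal (2 * g x) ∂ν := by
  rw [Measure.prod_apply (measurableSet_le (by fun_prop) (by fun_prop)),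
    ← lintegral_const_mul' _ _ ENNReal.ofReal_ne_top]
  exact lintegral_mono fun x => withDensity_closedBall_le hM (f x) (g x)

lemma measureReal_dist_le_le_of_indepFun {Ω α : Type*} [MeasurableSpace Ω] [MeasurableSpace α]
    {μ : Measure Ω} [IsProbabilityMeasure μ] {U : Ω → α} {Z : Ω → ℝ}
    (hU : Measurable U) (hZ : Measurable Z) (hind : IndepFun U Z μ)
    (hZ_law : μ.map Z = volume.withDensity fun y => ENNReal.ofReal (ρ y))
    (hM : ∀ᵐ y, ρ y ≤ M) {f g : α → ℝ} (hf : Measurable f) (hg : Measurable g)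
    (hg_nonneg : ∀ x, 0 ≤ g x) (hg_int : Integrable (fun ω => g (U ω)) μ) :
    μ.real {ω | dist (Z ω) (f (U ω)) ≤ g (U ω)} ≤ 2 * M * ∫ ω, g (U ω) ∂μ := by
  have hM0 : 0 ≤ M := by
    refine nonneg_of_ae_le_of_withDensity_ne_zero ?_ hM
    rw [← hZ_law]
    exact (Measure.isProbabilityMeasure_map hZ.aemeasurable).ne_zero
  have hS : MeasurableSet {p : α × ℝ | dist p.2 (f p.1) ≤ g p.1} :=
    measurableSet_le (by fun_prop) (by fun_prop)
  have hmap := (indepFun_iff_map_prod_eq_prod_map_map hU.aemeasurable hZ.aemeasurable).mp hind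
  have hbound : μ {ω | dist (Z ω) (f (U ω)) ≤ g (U ω)}
      ≤ ENNReal.ofReal (2 * M * ∫ ω, g (U ω) ∂μ) := calc
    _ = μ.map (fun ω => (U ω, Z ω)) {p | dist p.2 (f p.1) ≤ g p.1} :=
      (Measure.map_apply (hU.prodMk hZ) hS).symm
    _ ≤ ENNReal.ofReal M * ∫⁻ x, ENNReal.ofReal (2 * g x) ∂(μ.map U) := by
      rw [hmap, hZ_law]
      exact prod_withDensity_le _ hM hf hg
    _ = ENNReal.ofReal (2 * M * ∫ ω, g (U ω) ∂μ) := by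
      rw [lintegral_map (by fun_prop) hU, ← ofReal_integral_eq_lintegral_ofReal
        (hg_int.const_mul 2) (Filter.Eventually.of_forall fun ω => by simp [hg_nonneg]),
        integral_const_mul, ← ENNReal.ofReal_mul hM0, mul_left_comm, mul_assoc]
  have hEg : 0 ≤ ∫ ω, g (U ω) ∂μ := integral_nonneg fun ω => hg_nonneg (U ω)
  exact ENNReal.toReal_le_of_le_ofReal (by positivity) hbound

end BoundedDensity

theorem stmt_1_general {Ω : Type*} [MeasureSpace Ω] (μ : Measure Ω) [IsProbabilityMeasure μ]
    (X Y Xb Yb : Ω → ℝ)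
    (hX : Measurable X) (hY : Measurable Y) (hXb : Measurable Xb) (hYb : Measurable Yb)
    (h_indep : IndepFun (fun ω => (X ω, Y ω)) (fun ω => (Xb ω, Yb ω)) μ)
    (h_copy : Measure.map (fun ω => (Xb ω, Yb ω)) μ = Measure.map (fun ω => (X ω, Y ω)) μ)
    (ρY : ℝ → ℝ)
    (h_density : Measure.map Y μ = volume.withDensity (fun y => ENNReal.ofReal (ρY y)))
    (M : ℝ) (hM : ∀ᵐ y ∂(volume : Measure ℝ), ρY y ≤ M)
    (h_int : Integrable (fun ω => |X ω - Y ω|) μ) :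
    (∫ ω, |K (X ω - Xb ω) - K (Y ω - Yb ω)| ∂μ) ≤ 8 * M * ∫ ω, |X ω - Y ω| ∂μ := by
  have h_ident : IdentDistrib (fun ω => (Xb ω, Yb ω)) (fun ω => (X ω, Y ω)) μ μ :=
    ⟨(hXb.prodMk hYb).aemeasurable, (hX.prodMk hY).aemeasurable, h_copy⟩
  have h_abs_ident : IdentDistrib (fun ω => |Xb ω - Yb ω|) (fun ω => |X ω - Y ω|) μ μ :=
    h_ident.comp (by fun_prop : Measurable fun p : ℝ × ℝ => |p.1 - p.2|)
  set S₁ := {ω | dist (Yb ω) (Y ω) ≤ 2 * |X ω - Y ω|}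
  set S₂ := {ω | dist (Y ω) (Yb ω) ≤ 2 * |Xb ω - Yb ω|}
  have hS₁ : μ.real S₁ ≤ 2 * M * ∫ ω, 2 * |X ω - Y ω| ∂μ :=
    measureReal_dist_le_le_of_indepFun (hX.prodMk hY) hYb
      (h_indep.comp measurable_id measurable_snd)
      ((h_ident.comp measurable_snd).map_eq.trans h_density) hM (f := Prod.snd)
      (g := fun p => 2 * |p.1 - p.2|) measurable_snd (by fun_prop) (fun _ => by positivity)
      (h_int.const_mul 2)
  have hS₂ : μ.real S₂ ≤ 2 * M * ∫ ω, 2 * |X ω - Y ω| ∂μ := by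
    rw [integral_const_mul, ← h_abs_ident.integral_eq, ← integral_const_mul]
    exact measureReal_dist_le_le_of_indepFun (hXb.prodMk hYb) hY
      (h_indep.symm.comp measurable_id measurable_snd) h_density hM (f := Prod.snd)
      (g := fun p => 2 * |p.1 - p.2|) measurable_snd (by fun_prop) (fun _ => by positivity)
      ((h_abs_ident.integrable_iff.mpr h_int).const_mul 2)
  have h_pt : ∀ ω, |K (X ω - Xb ω) - K (Y ω - Yb ω)| ≤ (S₁ ∪ S₂).indicator 1 ω := by
    intro ω
    by_cases h : K (X ω - Xb ω) = K (Y ω - Yb ω)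
    · simp [h, Set.indicator_nonneg]
    · rw [Set.indicator_of_mem, Pi.one_apply]
      · exact abs_K_sub_K_le_one _ _
      rcases abs_le_two_mul_or_of_K_ne h (s := X ω - Y ω) (t := Xb ω - Yb ω) (by ring)
        with h₁ | h₂
      · left; simpa [S₁, Real.dist_eq, abs_sub_comm] using h₁
      · right; simpa [S₂, Real.dist_eq] using h₂
  have hS : MeasurableSet (S₁ ∪ S₂) :=
    (measurableSet_le (by fun_prop) (by fun_prop)).union
      (measurableSet_le (by fun_prop) (by fun_prop))
  calc ∫ ω, |K (X ω - Xb ω) - K (Y ω - Yb ω)| ∂μ ≤ μ.real (S₁ ∪ S₂) := by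
        rw [← integral_indicator_one hS]
        exact integral_mono_of_nonneg (ae_of_all _ fun ω => abs_nonneg _)
          ((integrable_const 1).indicator hS) (ae_of_all _ h_pt)
    _ ≤ μ.real S₁ + μ.real S₂ := measureReal_union_le _ _
    _ ≤ 8 * M * ∫ ω, |X ω - Y ω| ∂μ := by
        rw [integral_const_mul] at hS₁ hS₂
        linarith

theorem stmt_1 {Ω : Type*} [MeasureSpace Ω] (μ : Measure Ω) [IsProbabilityMeasure μ]
    (X Y Xb Yb : Ω → ℝ)
    (hX : Measurable X) (hY : Measurable Y) (hXb : Measurable Xb) (hYb : Measurable Yb)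
    (h_indep : IndepFun (fun ω => (X ω, Y ω)) (fun ω => (Xb ω, Yb ω)) μ)
    (h_copy : Measure.map (fun ω => (Xb ω, Yb ω)) μ = Measure.map (fun ω => (X ω, Y ω)) μ)
    (ρY : ℝ → ℝ) (hρY_meas : Measurable ρY)
    (h_density : Measure.map Y μ = volume.withDensity (fun y => ENNReal.ofReal (ρY y)))
    (M : ℝ) (hM : ∀ᵐ y ∂(volume : Measure ℝ), ρY y ≤ M)
    (h_int : Integrable (fun ω => |X ω - Y ω|) μ) :
    (∫ ω, |K (X ω - Xb ω) - K (Y ω - Yb ω)| ∂μ) ≤ 8 * M * ∫ ω, |X ω - Y ω| ∂μ :=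
  stmt_1_general μ X Y Xb Yb hX hY hXb hYb h_indep h_copy ρY h_density M hM h_int
end

section
/- Let X₁,…,X_N be i.i.d. ℝ^d-valued random variables with common law ρ, and let ρ_N = (1/N)∑_{i=1}^N δ_{X_i} be the empirical measure. Then for all a ∈ ℝ^d, E[ sup_{u ≥ 0} | ∫ 𝟙_{|a-y| ≤ u} (ρ_N - ρ)(dy) | ] ≤ 3/√N. -/
/-!
With `Z_i = |a - X_i|` the integrand is the uniform distance between the empirical and the true
distribution functions of the real i.i.d. sample `Z_i`, so it suffices to treat a nested family
of sets `A_0 ⊆ A_1 ⊆ ⋯`. Along an increasing family `L_k` with `ρ(L_k) ≤ 1/2` the compensated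
counts `Y_k = ∑_i (𝟙_{L_k}(X_i) - ρ(L_k)) / (1 - ρ(L_k))` form a martingale in `k`: each increment
is a sum of centred functions of single points vanishing on `L_k`, while `Y_0, …, Y_k` do not see
a point outside `L_k`. Hence Doob's `L²` inequality gives `E[max_{k ≤ n} Y_k²] ≤ 4 E[Y_n²] ≤ 4N`,
and the empirical deviation at `L_k` is at most `|Y_k| / N`. Sets of measure `> 1/2` are handled
through their complements, which again form such a family; Cauchy–Schwarz applied to the two
maxima gives `√(8/N) ≤ 3/√N`. Right-continuity in the radius passes from finite grids of radii to
the supremum over all radii.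
-/

open MeasureTheory ProbabilityTheory Finset

lemma Real.abs_sign_le_one (r : ℝ) : |Real.sign r| ≤ 1 := by
  rcases Real.sign_apply_eq r with h | h | h <;> simp [h]

lemma Real.sign_mul_sub_le_abs_sub (a b : ℝ) : Real.sign a * (b - a) ≤ |b| - |a| := by
  have hb : Real.sign a * b ≤ |b| := (le_abs_self _).trans <| by
    rw [abs_mul]; exact mul_le_of_le_one_left (abs_nonneg _) (Real.abs_sign_le_one a)
  have ha : Real.sign a * a = |a| := by
    rcases lt_trichotomy a 0 with h | rfl | h
    · simp [Real.sign_of_neg h, abs_of_neg h]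
    · simp
    · simp [Real.sign_of_pos h, abs_of_pos h]
  linarith [mul_sub (Real.sign a) b a]

lemma Real.measurable_sign : Measurable Real.sign :=
  Measurable.ite measurableSet_Iio measurable_const
    (Measurable.ite measurableSet_Ioi measurable_const measurable_const)

lemma partialSups_congr {α : Type*} [SemilatticeSup α] {f f' : ℕ → α} {k : ℕ}
    (h : ∀ l ≤ k, f l = f' l) : partialSups f k = partialSups f' k :=
  Finset.sup'_congr nonempty_Iic rfl fun l hl => h l (mem_Iic.1 hl)

lemma partialSups_abs_nonneg {f : ℕ → ℝ} (k : ℕ) : 0 ≤ partialSups (fun l => |f l|) k :=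
  (abs_nonneg (f 0)).trans (le_partialSups_of_le (fun l => |f l|) (Nat.zero_le k))

lemma measurable_partialSups {Ω : Type*} [MeasurableSpace Ω] {f : ℕ → Ω → ℝ}
    (hf : ∀ k, Measurable (f k)) (n : ℕ) : Measurable fun ω => partialSups (f · ω) n := by
  simp only [partialSups_eq_sup'_range]
  exact Finset.measurable_range_sup'' fun k _ => hf k

theorem sum_partialSups_mul_sub_le (z : ℕ → ℝ) (n : ℕ) :
    ∑ k ∈ range n, partialSups z k * (z (k + 1) - z k) ≤
      partialSups z n * z n - partialSups z n ^ 2 / 2 := by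
  induction n with
  | zero => simp only [range_zero, sum_empty, partialSups_zero]; nlinarith [sq_nonneg (z 0)]
  | succ n ih =>
    rw [sum_range_succ, partialSups_add_one]
    rcases le_total (partialSups z n) (z (n + 1)) with h | h
    · rw [sup_eq_right.2 h]; nlinarith [sq_nonneg (partialSups z n - z (n + 1))]
    · rw [sup_eq_left.2 h]; linarith

/-- Pathwise form of Doob's `L²` maximal inequality. -/
theorem partialSups_sq_le (z : ℕ → ℝ) (n : ℕ) :
    partialSups z n ^ 2 ≤
      4 * z n ^ 2 - 4 * ∑ k ∈ range n, partialSups z k * (z (k + 1) - z k) := by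
  nlinarith [sum_partialSups_mul_sub_le z n, sq_nonneg (partialSups z n - 2 * z n)]

section Integral

variable {Ω E : Type*} [MeasurableSpace Ω] [MeasurableSpace E] {μ : Measure Ω} {ρ : Measure E}

lemma integrable_of_abs_le [IsFiniteMeasure μ] {f : Ω → ℝ} (hf : Measurable f) {C : ℝ}
    (hC : ∀ ω, |f ω| ≤ C) : Integrable f μ :=
  .of_bound hf.aestronglyMeasurable C (ae_of_all _ hC)

lemma integral_comp_eq_of_map_eq {Y : Ω → E} (hY : Measurable Y) (hlaw : μ.map Y = ρ)
    {f : E → ℝ} (hf : Measurable f) : ∫ ω, f (Y ω) ∂μ = ∫ x, f x ∂ρ := by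
  rw [← hlaw, integral_map hY.aemeasurable hf.aestronglyMeasurable]

lemma integral_le_sqrt_integral_sq [IsProbabilityMeasure μ] {f : Ω → ℝ} (hf : MemLp f 2 μ) :
    ∫ ω, f ω ∂μ ≤ √(∫ ω, f ω ^ 2 ∂μ) := by
  refine Real.le_sqrt_of_sq_le ?_
  have := variance_nonneg f μ
  rw [variance_eq_sub hf] at this
  simpa using this

lemma integral_max_le_sqrt [IsProbabilityMeasure μ] {f g : Ω → ℝ} (hf : MemLp f 2 μ)
    (hg : MemLp g 2 μ) :
    ∫ ω, max (f ω) (g ω) ∂μ ≤ √(∫ ω, f ω ^ 2 ∂μ + ∫ ω, g ω ^ 2 ∂μ) := by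
  have hmax : MemLp (fun ω => max (f ω) (g ω)) 2 μ :=
    (hf.norm.add hg.norm).of_le (hf.1.sup hg.1) <| ae_of_all _ fun ω => by
      simp only [Real.norm_eq_abs, Pi.add_apply]
      exact abs_max_le_max_abs_abs.trans ((max_le_add_of_nonneg (abs_nonneg _)
        (abs_nonneg _)).trans (le_abs_self _))
  calc ∫ ω, max (f ω) (g ω) ∂μ ≤ √(∫ ω, max (f ω) (g ω) ^ 2 ∂μ) :=
        integral_le_sqrt_integral_sq hmax
    _ ≤ √(∫ ω, f ω ^ 2 + g ω ^ 2 ∂μ) := by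
        refine Real.sqrt_le_sqrt (integral_mono hmax.integrable_sq
          (hf.integrable_sq.add hg.integrable_sq) fun ω => ?_)
        rcases le_total (f ω) (g ω) with h | h
        · simp only [max_eq_right h]; nlinarith
        · simp only [max_eq_left h]; nlinarith
    _ = √(∫ ω, f ω ^ 2 ∂μ + ∫ ω, g ω ^ 2 ∂μ) := by
        rw [integral_add hf.integrable_sq hg.integrable_sq]

/-- Doob's `L²` maximal inequality, for a process whose increments are orthogonal to the
signed running maximum. -/
theorem integral_sq_partialSups_abs_le [IsFiniteMeasure μ] {Y : ℕ → Ω → ℝ} {C : ℝ}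
    (hY : ∀ k, Measurable (Y k)) (hC : ∀ k ω, |Y k ω| ≤ C) (n : ℕ)
    (horth : ∀ k < n, ∫ ω, partialSups (fun l => |Y l ω|) k * Real.sign (Y k ω) *
      (Y (k + 1) ω - Y k ω) ∂μ = 0) :
    ∫ ω, partialSups (fun l => |Y l ω|) n ^ 2 ∂μ ≤ 4 * ∫ ω, Y n ω ^ 2 ∂μ := by
  set M : ℕ → Ω → ℝ := fun k ω => partialSups (fun l => |Y l ω|) k
  have hM : ∀ k, Measurable (M k) := measurable_partialSups fun l => (hY l).abs
  have hMC : ∀ k ω, |M k ω| ≤ C := fun k ω => by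
    rw [abs_of_nonneg (partialSups_abs_nonneg k)]
    exact partialSups_le _ _ _ fun l _ => hC l ω
  have hYi : ∀ k, Integrable (Y k) μ := fun k => integrable_of_abs_le (hY k) (hC k)
  have hsq : ∀ {f : Ω → ℝ}, Measurable f → (∀ ω, |f ω| ≤ C) → Integrable (f · ^ 2) μ :=
    fun hf hfC => integrable_of_abs_le (hf.pow_const 2) (C := C ^ 2) fun ω => by
      rw [abs_pow]; exact pow_le_pow_left₀ (abs_nonneg _) (hfC ω) 2
  have hinc : ∀ k, Integrable (fun ω => M k ω * (|Y (k + 1) ω| - |Y k ω|)) μ := fun k =>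
    ((hYi _).abs.sub (hYi k).abs).bdd_mul (hM k).aestronglyMeasurable (ae_of_all _ (hMC k))
  have hsum : Integrable (fun ω => ∑ k ∈ range n, M k ω * (|Y (k + 1) ω| - |Y k ω|)) μ :=
    integrable_finsetSum _ fun k _ => hinc k
  -- `|Y|` is a submartingale: `M k ≥ 0` tests the convexity bound
  -- `|Y (k + 1)| - |Y k| ≥ sign (Y k) * (Y (k + 1) - Y k)`.
  have hinc_nonneg : ∀ k < n, 0 ≤ ∫ ω, M k ω * (|Y (k + 1) ω| - |Y k ω|) ∂μ := fun k hk => by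
    rw [← horth k hk]
    refine integral_mono (((hYi _).sub (hYi k)).bdd_mul (c := C)
      ((hM k).mul (Real.measurable_sign.comp (hY k))).aestronglyMeasurable
      (ae_of_all _ fun ω => ?_)) (hinc k) fun ω => ?_
    · rw [Real.norm_eq_abs, abs_mul]
      exact (mul_le_of_le_one_right (abs_nonneg _) (Real.abs_sign_le_one _)).trans (hMC k ω)
    · rw [mul_assoc]
      exact mul_le_mul_of_nonneg_left (Real.sign_mul_sub_le_abs_sub _ _) (partialSups_abs_nonneg k)
  calc ∫ ω, M n ω ^ 2 ∂μ
      ≤ ∫ ω, 4 * Y n ω ^ 2 - 4 * ∑ k ∈ range n, M k ω * (|Y (k + 1) ω| - |Y k ω|) ∂μ :=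
        integral_mono (hsq (hM n) (hMC n)) (((hsq (hY n) (hC n)).const_mul 4).sub
          (hsum.const_mul 4)) fun ω => by
            simpa only [sq_abs] using partialSups_sq_le (fun l => |Y l ω|) n
    _ = 4 * ∫ ω, Y n ω ^ 2 ∂μ -
          4 * ∑ k ∈ range n, ∫ ω, M k ω * (|Y (k + 1) ω| - |Y k ω|) ∂μ := by
        rw [integral_sub ((hsq (hY n) (hC n)).const_mul 4) (hsum.const_mul 4),
          integral_const_mul, integral_const_mul, integral_finsetSum _ fun k _ => hinc k]
    _ ≤ 4 * ∫ ω, Y n ω ^ 2 ∂μ := by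
        linarith [sum_nonneg fun k hk => hinc_nonneg k (mem_range.1 hk)]

end Integral

section Compensated

variable {E : Type*} [MeasurableSpace E]

noncomputable def compensatedIndicator (ρ : Measure E) (s : Set E) (x : E) : ℝ :=
  (s.indicator 1 x - ρ.real s) / (1 - ρ.real s)

variable {ρ : Measure E} {s : Set E}

lemma measurable_compensatedIndicator (hs : MeasurableSet s) :
    Measurable (compensatedIndicator ρ s) :=
  ((measurable_const.indicator hs).sub measurable_const).div_const _

lemma compensatedIndicator_of_mem (hρs : ρ.real s ≠ 1) {x : E} (hx : x ∈ s) :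
    compensatedIndicator ρ s x = 1 := by
  rw [compensatedIndicator, Set.indicator_of_mem hx, Pi.one_apply,
    div_self (sub_ne_zero.2 hρs.symm)]

lemma compensatedIndicator_of_notMem {x : E} (hx : x ∉ s) :
    compensatedIndicator ρ s x = -ρ.real s / (1 - ρ.real s) := by
  rw [compensatedIndicator, Set.indicator_of_notMem hx, zero_sub]

lemma abs_compensatedIndicator_le_one (hρs : ρ.real s ≤ 1 / 2) (x : E) :
    |compensatedIndicator ρ s x| ≤ 1 := by
  by_cases hx : x ∈ s
  · rw [compensatedIndicator_of_mem (by linarith) hx, abs_one]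
  · have := measureReal_nonneg (μ := ρ) (s := s)
    rw [compensatedIndicator_of_notMem hx, abs_div, abs_neg, abs_of_nonneg this,
      abs_of_pos (by linarith), div_le_one (by linarith)]
    linarith

lemma integrable_compensatedIndicator [IsFiniteMeasure ρ] (hs : MeasurableSet s) :
    Integrable (compensatedIndicator ρ s) ρ :=
  (((integrable_const 1).indicator hs).sub (integrable_const _)).div_const _

lemma integral_compensatedIndicator [IsProbabilityMeasure ρ] (hs : MeasurableSet s) :
    ∫ x, compensatedIndicator ρ s x ∂ρ = 0 := by
  have h1 : Integrable (s.indicator (1 : E → ℝ)) ρ := (integrable_const 1).indicator hs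
  simp_rw [compensatedIndicator, integral_div, integral_sub h1 (integrable_const _),
    integral_indicator_one hs]
  simp

end Compensated

section Independence

variable {Ω E ι : Type*} [MeasurableSpace Ω] [MeasurableSpace E] {μ : Measure Ω}
  [Fintype ι] [DecidableEq ι] {X : ι → Ω → E}

/-- Where `ψ (X i) ≠ 0`, `g X` is a function of the other coordinates, hence independent of
`X i`. -/
theorem integral_mul_comp_eq_zero (hX : ∀ i, Measurable (X i)) (hindep : iIndepFun X μ)
    {i : ι} {ψ : E → ℝ} (hψ : Measurable ψ) (hψ0 : ∫ ω, ψ (X i ω) ∂μ = 0) {s : Set E}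
    (hψs : ∀ x ∈ s, ψ x = 0) {g : (ι → E) → ℝ} (hg : Measurable g) {x₀ : E}
    (hgs : ∀ v, v i ∉ s → g (Function.update v i x₀) = g v) :
    ∫ ω, g (X · ω) * ψ (X i ω) ∂μ = 0 := by
  set g' : (({i}ᶜ : Finset ι) → E) → ℝ := fun w =>
    g fun j => if h : j = i then x₀ else w ⟨j, by simpa using h⟩
  have hg' : Measurable g' :=
    hg.comp (measurable_pi_lambda _ fun j => by
      by_cases h : j = i
      · simp only [h, dite_true]; exact measurable_const
      · simp only [h, dite_false]; exact measurable_pi_apply _)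
  have hupd : ∀ ω, g (X · ω) * ψ (X i ω) = g' (fun j : ({i}ᶜ : Finset ι) => X j ω) * ψ (X i ω) := by
    intro ω
    have : (fun j => if h : j = i then x₀ else X j ω) = Function.update (X · ω) i x₀ := by
      funext j; by_cases h : j = i <;> simp [h]
    by_cases hs : X i ω ∈ s
    · simp [hψs _ hs]
    · simp only [g', this, hgs (X · ω) hs]
  have hind : IndepFun (fun ω => g' fun j : ({i}ᶜ : Finset ι) => X j ω) (fun ω => ψ (X i ω)) μ :=
    (hindep.indepFun_finset ({i}ᶜ) {i} disjoint_compl_left hX).comp hg'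
      (hψ.comp (measurable_pi_apply (⟨i, mem_singleton_self i⟩ : ({i} : Finset ι))))
  rw [integral_congr_ae (ae_of_all _ hupd), hind.integral_fun_mul_eq_mul_integral
    (hg'.comp (measurable_pi_lambda _ fun j => hX j)).aestronglyMeasurable
    (hψ.comp (hX i)).aestronglyMeasurable, hψ0, mul_zero]

end Independence

section Chain

variable {Ω E ι : Type*} [MeasurableSpace Ω] [MeasurableSpace E] {μ : Measure Ω}
  [Fintype ι] {ρ : Measure E} {s : Set E} {X : ι → Ω → E} {L : ℕ → Set E}

noncomputable def compensatedCount (ρ : Measure E) (s : Set E) (v : ι → E) : ℝ :=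
  ∑ j, compensatedIndicator ρ s (v j)

lemma measurable_compensatedCount (hs : MeasurableSet s) :
    Measurable (compensatedCount ρ s : (ι → E) → ℝ) :=
  Finset.measurable_sum _ fun j _ =>
    (measurable_compensatedIndicator hs).comp (measurable_pi_apply j)

lemma abs_compensatedCount_le (hρs : ρ.real s ≤ 1 / 2) (v : ι → E) :
    |compensatedCount ρ s v| ≤ Fintype.card ι :=
  (abs_sum_le_sum_abs _ _).trans <|
    (sum_le_card_nsmul _ _ 1 fun j _ => abs_compensatedIndicator_le_one hρs _).trans (by simp)

lemma compensatedCount_update [DecidableEq ι] {v : ι → E} {i : ι} {x₀ : E} (hv : v i ∉ s)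
    (hx₀ : x₀ ∉ s) : compensatedCount ρ s (Function.update v i x₀) = compensatedCount ρ s v := by
  refine sum_congr rfl fun j _ => ?_
  by_cases h : j = i
  · subst h; simp [compensatedIndicator_of_notMem hv, compensatedIndicator_of_notMem hx₀]
  · simp [h]

theorem integral_compensatedCount_sq_le [IsProbabilityMeasure μ] [IsProbabilityMeasure ρ]
    (hX : ∀ i, Measurable (X i)) (hindep : iIndepFun X μ) (hlaw : ∀ i, μ.map (X i) = ρ)
    (hs : MeasurableSet s) (hρs : ρ.real s ≤ 1 / 2) :
    ∫ ω, compensatedCount ρ s (X · ω) ^ 2 ∂μ ≤ Fintype.card ι := by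
  set Z : ι → Ω → ℝ := fun i ω => compensatedIndicator ρ s (X i ω)
  have hZm : ∀ i, Measurable (Z i) := fun i => (measurable_compensatedIndicator hs).comp (hX i)
  have hZ1 : ∀ i ω, |Z i ω| ≤ 1 := fun i ω => abs_compensatedIndicator_le_one hρs _
  have hZ0 : ∀ i, ∫ ω, Z i ω ∂μ = 0 := fun i => by
    rw [integral_comp_eq_of_map_eq (hX i) (hlaw i) (measurable_compensatedIndicator hs),
      integral_compensatedIndicator hs]
  have hsum : ∀ ω, compensatedCount ρ s (X · ω) = (∑ i, Z i) ω := fun ω => by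
    simp [compensatedCount, Z]
  have hsum_meas : Measurable (∑ i, Z i) := by fun_prop
  have hsum0 : ∫ ω, (∑ i, Z i) ω ∂μ = 0 := by
    simp_rw [Finset.sum_apply]
    rw [integral_finsetSum _ fun i _ => integrable_of_abs_le (hZm i) (hZ1 i)]
    simp [hZ0]
  calc ∫ ω, compensatedCount ρ s (X · ω) ^ 2 ∂μ = Var[∑ i, Z i; μ] := by
        simp_rw [hsum, variance_of_integral_eq_zero hsum_meas.aemeasurable hsum0]
    _ = ∑ i, Var[Z i; μ] :=
        IndepFun.variance_sum
          (fun i _ => .of_bound (hZm i).aestronglyMeasurable 1 (ae_of_all _ (hZ1 i)))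
          fun i _ j _ hij => (hindep.indepFun hij).comp (measurable_compensatedIndicator hs)
            (measurable_compensatedIndicator hs)
    _ ≤ ∑ _i : ι, (1 : ℝ) := sum_le_sum fun i _ => by
        rw [variance_of_integral_eq_zero (hZm i).aemeasurable (hZ0 i)]
        refine (le_abs_self _).trans ?_
        simpa using norm_integral_le_of_norm_le_const (μ := μ) (C := 1) (f := fun ω => Z i ω ^ 2)
          (ae_of_all _ fun ω => by simpa using hZ1 i ω)
    _ = Fintype.card ι := by simp

/-- The martingale property of `s ↦ compensatedCount ρ s X` along increasing sets. -/
theorem integral_mul_compensatedCount_sub_eq_zero [DecidableEq ι] [IsProbabilityMeasure μ]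
    [IsProbabilityMeasure ρ] (hX : ∀ i, Measurable (X i)) (hindep : iIndepFun X μ)
    (hlaw : ∀ i, μ.map (X i) = ρ) {t : Set E} (hst : s ⊆ t) (hs : MeasurableSet s)
    (ht : MeasurableSet t) (hρs : ρ.real s ≠ 1) (hρt : ρ.real t ≠ 1) {g : (ι → E) → ℝ}
    (hg : Measurable g) {C : ℝ} (hgC : ∀ v, |g v| ≤ C) {x₀ : E}
    (hgs : ∀ i v, v i ∉ s → g (Function.update v i x₀) = g v) :
    ∫ ω, g (X · ω) * (compensatedCount ρ t (X · ω) - compensatedCount ρ s (X · ω)) ∂μ = 0 := by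
  set ψ : E → ℝ := fun x => compensatedIndicator ρ t x - compensatedIndicator ρ s x
  have hψ : Measurable ψ :=
    (measurable_compensatedIndicator ht).sub (measurable_compensatedIndicator hs)
  have hψi : Integrable ψ ρ :=
    (integrable_compensatedIndicator ht).sub (integrable_compensatedIndicator hs)
  have hψ0 : ∀ i, ∫ ω, ψ (X i ω) ∂μ = 0 := fun i => by
    rw [integral_comp_eq_of_map_eq (hX i) (hlaw i) hψ, integral_sub
      (integrable_compensatedIndicator ht) (integrable_compensatedIndicator hs),
      integral_compensatedIndicator ht, integral_compensatedIndicator hs, sub_self]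
  have hψs : ∀ x ∈ s, ψ x = 0 := fun x hx => by
    simp only [ψ, compensatedIndicator_of_mem hρt (hst hx), compensatedIndicator_of_mem hρs hx,
      sub_self]
  calc _ = ∫ ω, ∑ i, g (X · ω) * ψ (X i ω) ∂μ := by
        simp_rw [compensatedCount, ← sum_sub_distrib, mul_sum]; rfl
    _ = ∑ i, ∫ ω, g (X · ω) * ψ (X i ω) ∂μ := integral_finsetSum _ fun i _ =>
        ((hlaw i ▸ hψi).comp_measurable (hX i)).bdd_mul
          (hg.comp (measurable_pi_lambda _ hX)).aestronglyMeasurable (ae_of_all _ fun ω => hgC _)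
    _ = 0 := sum_eq_zero fun i _ =>
        integral_mul_comp_eq_zero hX hindep hψ (hψ0 i) hψs hg (hgs i)

theorem integral_partialSups_mul_sign_mul_sub_eq_zero [IsProbabilityMeasure μ]
    [IsProbabilityMeasure ρ] (hX : ∀ i, Measurable (X i)) (hindep : iIndepFun X μ)
    (hlaw : ∀ i, μ.map (X i) = ρ) (hL : Monotone L) (hLm : ∀ k, MeasurableSet (L k))
    (hLρ : ∀ k, ρ.real (L k) ≤ 1 / 2) (k : ℕ) :
    ∫ ω, partialSups (fun l => |compensatedCount ρ (L l) (X · ω)|) k *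
      Real.sign (compensatedCount ρ (L k) (X · ω)) *
      (compensatedCount ρ (L (k + 1)) (X · ω) - compensatedCount ρ (L k) (X · ω)) ∂μ = 0 := by
  classical
  have hρ : ∀ l, ρ.real (L l) ≠ 1 := fun l => by linarith [hLρ l]
  obtain ⟨x₀, hx₀⟩ : ∃ x₀, x₀ ∉ L k := by
    by_contra! h
    exact hρ k (by rw [Set.eq_univ_of_forall h, probReal_univ])
  set g : (ι → E) → ℝ := fun v =>
    partialSups (fun l => |compensatedCount ρ (L l) v|) k * Real.sign (compensatedCount ρ (L k) v)
  have hgC : ∀ v, |g v| ≤ Fintype.card ι := fun v => by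
    rw [abs_mul, abs_of_nonneg (partialSups_abs_nonneg k)]
    refine (mul_le_of_le_one_right (partialSups_abs_nonneg k) (Real.abs_sign_le_one _)).trans ?_
    exact partialSups_le _ _ _ fun l _ => abs_compensatedCount_le (hLρ l) v
  have hgs : ∀ i v, v i ∉ L k → g (Function.update v i x₀) = g v := fun i v hv => by
    have hupd : ∀ l ≤ k, compensatedCount ρ (L l) (Function.update v i x₀) =
        compensatedCount ρ (L l) v := fun l hl =>
      compensatedCount_update (fun h => hv (hL hl h)) (fun h => hx₀ (hL hl h))
    simp only [g, hupd k le_rfl, partialSups_congr fun l hl => congrArg abs (hupd l hl)]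
  exact integral_mul_compensatedCount_sub_eq_zero hX hindep hlaw (hL k.le_succ) (hLm k) (hLm _)
    (hρ k) (hρ _) ((measurable_partialSups (fun l => (measurable_compensatedCount (hLm l)).abs)
      k).mul (Real.measurable_sign.comp (measurable_compensatedCount (hLm k)))) hgC hgs

theorem integral_sq_partialSups_abs_compensatedCount_le [IsProbabilityMeasure μ]
    [IsProbabilityMeasure ρ] (hX : ∀ i, Measurable (X i)) (hindep : iIndepFun X μ)
    (hlaw : ∀ i, μ.map (X i) = ρ) (hL : Monotone L) (hLm : ∀ k, MeasurableSet (L k))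
    (hLρ : ∀ k, ρ.real (L k) ≤ 1 / 2) (n : ℕ) :
    ∫ ω, partialSups (fun k => |compensatedCount ρ (L k) (X · ω)|) n ^ 2 ∂μ ≤
      4 * Fintype.card ι :=
  (integral_sq_partialSups_abs_le
    (fun k => (measurable_compensatedCount (hLm k)).comp (measurable_pi_lambda _ hX))
    (fun k ω => abs_compensatedCount_le (hLρ k) _) n
    fun k _ => integral_partialSups_mul_sign_mul_sub_eq_zero hX hindep hlaw hL hLm hLρ k).trans <|
    by gcongr; exact integral_compensatedCount_sq_le hX hindep hlaw (hLm n) (hLρ n)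

end Chain

section NestedFamily

variable {Ω E ι : Type*} [MeasurableSpace Ω] [MeasurableSpace E] {μ : Measure Ω}
  [Fintype ι] {ρ : Measure E} {s : Set E} {A : ℕ → Set E} {X : ι → Ω → E}

noncomputable def empiricalDev (ρ : Measure E) (s : Set E) (v : ι → E) : ℝ :=
  |(∑ i, s.indicator 1 (v i)) / Fintype.card ι - ρ.real s|

lemma empiricalDev_nonneg {v : ι → E} : 0 ≤ empiricalDev ρ s v := abs_nonneg _

lemma measurable_empiricalDev (hs : MeasurableSet s) :
    Measurable (empiricalDev ρ s : (ι → E) → ℝ) :=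
  (((Finset.measurable_sum _ fun i _ =>
    (measurable_const.indicator hs).comp (measurable_pi_apply i)).div_const _).sub_const _).abs

lemma empiricalDev_le_one [IsProbabilityMeasure ρ] (v : ι → E) : empiricalDev ρ s v ≤ 1 := by
  have hsum : ∑ i, s.indicator (1 : E → ℝ) (v i) ≤ Fintype.card ι :=
    (sum_le_card_nsmul _ _ 1 fun i _ => Set.indicator_le_self' (fun _ _ => zero_le_one) _).trans
      (by simp)
  have h0 : 0 ≤ (∑ i, s.indicator (1 : E → ℝ) (v i)) / Fintype.card ι :=
    div_nonneg (sum_nonneg fun i _ => Set.indicator_nonneg (fun _ _ => zero_le_one) _)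
      (by positivity)
  have h1 : (∑ i, s.indicator (1 : E → ℝ) (v i)) / Fintype.card ι ≤ 1 :=
    div_le_one_of_le₀ hsum (by positivity)
  rw [empiricalDev, abs_le]
  constructor <;>
    linarith [measureReal_nonneg (μ := ρ) (s := s), measureReal_le_one (μ := ρ) (s := s)]

lemma empiricalDev_compl [IsProbabilityMeasure ρ] [Nonempty ι] (hs : MeasurableSet s)
    (v : ι → E) : empiricalDev ρ sᶜ v = empiricalDev ρ s v := by
  rw [empiricalDev, empiricalDev, probReal_compl_eq_one_sub hs, ← abs_neg]
  congr 1
  simp only [Set.indicator_compl, Pi.sub_apply, Pi.one_apply, sum_sub_distrib, sum_const,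
    card_univ, nsmul_eq_mul, mul_one]
  field_simp
  ring

lemma empiricalDev_le [Nonempty ι] (hρs : ρ.real s < 1) (v : ι → E) :
    empiricalDev ρ s v ≤ |compensatedCount ρ s v| / Fintype.card ι := by
  have hN : (0 : ℝ) < Fintype.card ι := by exact_mod_cast Fintype.card_pos
  have hp := measureReal_nonneg (μ := ρ) (s := s)
  have hp1 : 1 - ρ.real s ≠ 0 := by linarith
  have key : (∑ i, s.indicator 1 (v i)) / Fintype.card ι - ρ.real s =
      (1 - ρ.real s) * (compensatedCount ρ s v / Fintype.card ι) := by
    simp only [compensatedCount, compensatedIndicator, ← sum_div, sum_sub_distrib, sum_const,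
      card_univ, nsmul_eq_mul]
    field_simp
  rw [empiricalDev, key, abs_mul, abs_div, abs_of_pos hN, abs_of_pos (by linarith)]
  exact mul_le_of_le_one_left (by positivity) (by linarith)

/-- The sets `A k` of measure at most `1 / 2`, completed to an increasing family when `A` is. -/
noncomputable def halfChain (ρ : Measure E) (A : ℕ → Set E) : ℕ → Set E
  | 0 => if ρ.real (A 0) ≤ 1 / 2 then A 0 else ∅
  | k + 1 => if ρ.real (A (k + 1)) ≤ 1 / 2 then A (k + 1) else halfChain ρ A k

lemma halfChain_eq {k : ℕ} (h : ρ.real (A k) ≤ 1 / 2) : halfChain ρ A k = A k := by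
  cases k <;> simp only [halfChain, if_pos h]

lemma halfChain_subset (hA : Monotone A) (k : ℕ) : halfChain ρ A k ⊆ A k := by
  induction k with
  | zero => simp only [halfChain]; split_ifs <;> simp
  | succ k ih =>
    simp only [halfChain]; split_ifs
    · exact le_rfl
    · exact ih.trans (hA k.le_succ)

lemma monotone_halfChain (hA : Monotone A) : Monotone (halfChain ρ A) :=
  monotone_nat_of_le_succ fun k => by
    simp only [halfChain]; split_ifs
    · exact (halfChain_subset hA k).trans (hA k.le_succ)
    · exact le_rfl

lemma measurableSet_halfChain (hA : ∀ k, MeasurableSet (A k)) (k : ℕ) :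
    MeasurableSet (halfChain ρ A k) := by
  induction k with
  | zero => simp only [halfChain]; split_ifs; exacts [hA 0, .empty]
  | succ k ih => simp only [halfChain]; split_ifs; exacts [hA _, ih]

lemma measureReal_halfChain_le (k : ℕ) : ρ.real (halfChain ρ A k) ≤ 1 / 2 := by
  induction k with
  | zero => simp only [halfChain]; split_ifs with h; exacts [h, by simp]
  | succ k ih => simp only [halfChain]; split_ifs with h; exacts [h, ih]

/-- Up to complement, every `A k` with `k ≤ n` belongs to one of two increasing families of sets
of measure at most `1 / 2`. -/
lemma empiricalDev_le_max [IsProbabilityMeasure ρ] [Nonempty ι] (hAm : ∀ k, MeasurableSet (A k))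
    {n k : ℕ} (hk : k ≤ n) (v : ι → E) :
    empiricalDev ρ (A k) v ≤
      max (partialSups (fun j => |compensatedCount ρ (halfChain ρ A j) v|) n)
        (partialSups (fun j => |compensatedCount ρ (halfChain ρ (fun j => (A (n - j))ᶜ) j) v|) n) /
      Fintype.card ι := by
  by_cases h : ρ.real (A k) ≤ 1 / 2
  · calc empiricalDev ρ (A k) v = empiricalDev ρ (halfChain ρ A k) v := by rw [halfChain_eq h]
      _ ≤ |compensatedCount ρ (halfChain ρ A k) v| / Fintype.card ι :=
          empiricalDev_le (by linarith [measureReal_halfChain_le (ρ := ρ) (A := A) k]) v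
      _ ≤ _ := by
          gcongr
          exact (le_partialSups_of_le (fun j => |compensatedCount ρ (halfChain ρ A j) v|) hk).trans
            (le_max_left _ _)
  · set A' : ℕ → Set E := fun j => (A (n - j))ᶜ
    have hA' : A' (n - k) = (A k)ᶜ := by simp [A', Nat.sub_sub_self hk]
    have hc : ρ.real (A' (n - k)) ≤ 1 / 2 := by
      rw [hA', probReal_compl_eq_one_sub (hAm k)]; linarith
    calc empiricalDev ρ (A k) v = empiricalDev ρ (halfChain ρ A' (n - k)) v := by
          rw [halfChain_eq hc, hA', empiricalDev_compl (hAm k)]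
      _ ≤ |compensatedCount ρ (halfChain ρ A' (n - k)) v| / Fintype.card ι :=
          empiricalDev_le (by linarith [measureReal_halfChain_le (ρ := ρ) (A := A') (n - k)]) v
      _ ≤ _ := by
          gcongr
          exact (le_partialSups_of_le (fun j => |compensatedCount ρ (halfChain ρ A' j) v|)
            (Nat.sub_le n k)).trans (le_max_right _ _)

theorem integral_partialSups_empiricalDev_le [IsProbabilityMeasure μ] [IsProbabilityMeasure ρ]
    [Nonempty ι] (hX : ∀ i, Measurable (X i)) (hindep : iIndepFun X μ)
    (hlaw : ∀ i, μ.map (X i) = ρ) (hA : Monotone A) (hAm : ∀ k, MeasurableSet (A k)) (n : ℕ) :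
    ∫ ω, partialSups (fun k => empiricalDev ρ (A k) (X · ω)) n ∂μ ≤ √(8 / Fintype.card ι) := by
  set N : ℝ := (Fintype.card ι : ℝ)
  have hN : 0 < N := Nat.cast_pos.2 Fintype.card_pos
  have hXv : Measurable fun ω => (X · ω) := measurable_pi_lambda _ hX
  set M : (ℕ → Set E) → Ω → ℝ := fun L ω =>
    partialSups (fun j => |compensatedCount ρ (halfChain ρ L j) (X · ω)|) n
  have hMm : ∀ L, (∀ k, MeasurableSet (L k)) → Measurable (M L) := fun L hL =>
    measurable_partialSups (fun j =>
      ((measurable_compensatedCount (measurableSet_halfChain hL j)).comp hXv).abs) n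
  have hM : ∀ L ω, |M L ω| ≤ N := fun L ω => by
    rw [abs_of_nonneg (partialSups_abs_nonneg n)]
    exact partialSups_le _ _ _ fun j _ => abs_compensatedCount_le (measureReal_halfChain_le j) _
  have hM2 : ∀ L, Monotone L → (∀ k, MeasurableSet (L k)) → ∫ ω, M L ω ^ 2 ∂μ ≤ 4 * N :=
    fun L hL hLm => integral_sq_partialSups_abs_compensatedCount_le hX hindep hlaw
      (monotone_halfChain hL) (measurableSet_halfChain hLm) measureReal_halfChain_le n
  set A' : ℕ → Set E := fun j => (A (n - j))ᶜ
  have hA' : Monotone A' := fun j j' h => Set.compl_subset_compl.2 (hA (Nat.sub_le_sub_left h n))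
  have hA'm : ∀ j, MeasurableSet (A' j) := fun j => (hAm _).compl
  have hMLp : ∀ L, (∀ k, MeasurableSet (L k)) → MemLp (M L) 2 μ := fun L hL =>
    .of_bound (hMm L hL).aestronglyMeasurable N (ae_of_all _ (hM L))
  calc ∫ ω, partialSups (fun k => empiricalDev ρ (A k) (X · ω)) n ∂μ
      ≤ ∫ ω, max (M A ω) (M A' ω) / N ∂μ :=
        integral_mono_of_nonneg
          (ae_of_all _ fun ω => empiricalDev_nonneg.trans
            (le_partialSups_of_le (fun k => empiricalDev ρ (A k) (X · ω)) (Nat.zero_le n)))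
          ((integrable_of_abs_le ((hMm A hAm).max (hMm A' hA'm)) fun ω =>
            abs_max_le_max_abs_abs.trans (max_le (hM A ω) (hM A' ω))).div_const N)
          (ae_of_all _ fun ω => partialSups_le _ _ _ fun k hk => empiricalDev_le_max hAm hk _)
    _ = (∫ ω, max (M A ω) (M A' ω) ∂μ) / N := integral_div _ _
    _ ≤ √(∫ ω, M A ω ^ 2 ∂μ + ∫ ω, M A' ω ^ 2 ∂μ) / N := by
        gcongr; exact integral_max_le_sqrt (hMLp A hAm) (hMLp A' hA'm)
    _ ≤ √(4 * N + 4 * N) / N := by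
        gcongr
        exacts [hM2 A hA hAm, hM2 A' hA' hA'm]
    _ = √(8 / N) := by
        rw [div_eq_iff hN.ne', show 4 * N + 4 * N = 8 / N * N ^ 2 by field_simp; ring,
          Real.sqrt_mul' _ (sq_nonneg N), Real.sqrt_sq hN.le]

end NestedFamily

section EmpiricalCDF

open Filter Topology Set

variable {Ω ι : Type*} [MeasurableSpace Ω] {μ : Measure Ω} [Fintype ι] {ν : Measure ℝ}

lemma continuousWithinAt_indicator_Iic (z u : ℝ) :
    ContinuousWithinAt (fun t => (Iic t).indicator (1 : ℝ → ℝ) z) (Ici u) u := by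
  by_cases h : z ≤ u
  · exact continuousWithinAt_const.congr
      (fun t ht => indicator_of_mem (Set.mem_Iic.2 (h.trans ht)) _)
      (indicator_of_mem (Set.mem_Iic.2 h) _)
  · refine (continuousAt_const (y := (0 : ℝ)).congr ?_).continuousWithinAt
    filter_upwards [Iio_mem_nhds (not_le.1 h)] with t ht
    exact (indicator_of_notMem (not_le.2 (Set.mem_Iio.1 ht)) (1 : ℝ → ℝ)).symm

lemma continuousWithinAt_empiricalDev_Iic [IsProbabilityMeasure ν] (v : ι → ℝ) (u : ℝ) :
    ContinuousWithinAt (fun t => empiricalDev ν (Iic t) v) (Ici u) u := by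
  simp_rw [empiricalDev, ← cdf_eq_real]
  exact (((tendsto_finsetSum _ fun i _ => continuousWithinAt_indicator_Iic (v i) u).div_const _).sub
    ((cdf ν).right_continuous u)).abs

theorem tendsto_partialSups_grid_ciSup {D : ℝ → ℝ} (hD : ∀ u, ContinuousWithinAt D (Ici u) u)
    (hbdd : BddAbove (range D)) :
    Tendsto (fun m : ℕ => partialSups (fun k : ℕ => D (k / (m + 1) - m)) (2 * m * (m + 1)))
      atTop (𝓝 (⨆ u, D u)) := by
  refine tendsto_order.2 ⟨fun a ha => ?_, fun a ha => .of_forall fun m =>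
    (partialSups_le _ _ _ fun k _ => le_ciSup hbdd _).trans_lt ha⟩
  obtain ⟨u, hu⟩ := exists_lt_of_lt_ciSup ha
  set k : ℕ → ℕ := fun m => ⌈(u + m) * (m + 1)⌉₊
  have hgrid : ∀ᶠ m : ℕ in atTop,
      u ≤ k m / (m + 1) - m ∧ k m / (m + 1) - m ≤ u + 1 / (m + 1) ∧ k m ≤ 2 * m * (m + 1) := by
    filter_upwards [eventually_ge_atTop ⌈|u|⌉₊] with m hm
    have hum : |u| ≤ m := (Nat.le_ceil _).trans (by exact_mod_cast hm)
    have hm1 : (0 : ℝ) < m + 1 := by positivity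
    have hpos : 0 ≤ (u + m) * (m + 1) := mul_nonneg (by linarith [neg_abs_le u]) hm1.le
    have hk1 : (u + m) * (m + 1) ≤ k m := Nat.le_ceil _
    have hk2 : (k m : ℝ) < (u + m) * (m + 1) + 1 := Nat.ceil_lt_add_one hpos
    refine ⟨?_, ?_, ?_⟩
    · rw [le_sub_iff_add_le, le_div_iff₀ hm1]; exact hk1
    · rw [sub_le_iff_le_add, div_le_iff₀ hm1]
      field_simp
      linarith
    · have : (k m : ℝ) < 2 * m * (m + 1) + 1 := by nlinarith [le_abs_self u]
      exact_mod_cast Nat.lt_succ_iff.1 (by exact_mod_cast this)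
  have hlim : Tendsto (fun m : ℕ => (k m : ℝ) / (m + 1) - m) atTop (𝓝[≥] u) := by
    refine tendsto_nhdsWithin_iff.2 ⟨?_, hgrid.mono fun m hm => hm.1⟩
    refine tendsto_of_tendsto_of_tendsto_of_le_of_le' tendsto_const_nhds ?_
      (hgrid.mono fun m hm => hm.1) (hgrid.mono fun m hm => hm.2.1)
    simpa using tendsto_one_div_add_atTop_nhds_zero_nat.const_add u
  filter_upwards [((hD u).tendsto.comp hlim).eventually (lt_mem_nhds hu), hgrid] with m hm hgm
  exact hm.trans_le (le_partialSups_of_le (fun k : ℕ => D (k / (m + 1) - m)) hgm.2.2)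

theorem integral_iSup_empiricalDev_Iic_le [IsProbabilityMeasure μ] [IsProbabilityMeasure ν]
    [Nonempty ι] {Z : ι → Ω → ℝ} (hZ : ∀ i, Measurable (Z i)) (hindep : iIndepFun Z μ)
    (hlaw : ∀ i, μ.map (Z i) = ν) :
    ∫ ω, ⨆ u, empiricalDev ν (Iic u) (Z · ω) ∂μ ≤ √(8 / Fintype.card ι) := by
  have hZv : Measurable fun ω => (Z · ω) := measurable_pi_lambda _ hZ
  set D : Ω → ℝ → ℝ := fun ω u => empiricalDev ν (Iic u) (Z · ω)
  set g : ℕ → Ω → ℝ := fun m ω =>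
    partialSups (fun k : ℕ => D ω (k / (m + 1) - m)) (2 * m * (m + 1))
  have hg : ∀ m ω, ‖g m ω‖ ≤ 1 := fun m ω => by
    have h0 : 0 ≤ g m ω := empiricalDev_nonneg.trans
      (le_partialSups_of_le (fun k : ℕ => D ω (k / (m + 1) - m)) (Nat.zero_le _))
    rw [Real.norm_of_nonneg h0]
    exact partialSups_le _ _ _ fun k _ => empiricalDev_le_one _
  have hlim : Tendsto (fun m => ∫ ω, g m ω ∂μ) atTop (𝓝 (∫ ω, ⨆ u, D ω u ∂μ)) :=
    tendsto_integral_of_dominated_convergence (fun _ => 1)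
      (fun m => (measurable_partialSups (fun k =>
        (measurable_empiricalDev measurableSet_Iic).comp hZv) _).aestronglyMeasurable)
      (integrable_const 1) (fun m => ae_of_all _ (hg m))
      (ae_of_all _ fun ω => tendsto_partialSups_grid_ciSup
        (continuousWithinAt_empiricalDev_Iic (Z · ω))
        ⟨1, forall_mem_range.2 fun u => empiricalDev_le_one _⟩)
  refine le_of_tendsto' hlim fun m => integral_partialSups_empiricalDev_le
    (A := fun k : ℕ => Iic ((k : ℝ) / (m + 1) - m)) hZ hindep hlaw
    (fun k k' h => Iic_subset_Iic.2 ?_) (fun _ => measurableSet_Iic) _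
  gcongr

end EmpiricalCDF

theorem stmt_10 {Ω : Type*} [MeasurableSpace Ω] (μ : Measure Ω) [IsProbabilityMeasure μ]
    (d N : ℕ) (hN : 1 ≤ N)
    (ρ : Measure (EuclideanSpace ℝ (Fin d))) [IsProbabilityMeasure ρ]
    (X : Fin N → Ω → EuclideanSpace ℝ (Fin d))
    (hmeas : ∀ i, Measurable (X i))
    (hindep : iIndepFun X μ)
    (hlaw : ∀ i, Measure.map (X i) μ = ρ)
    (a : EuclideanSpace ℝ (Fin d)) :
    (∫ ω, ⨆ u : ℝ,
        |(∑ i : Fin N, if dist a (X i ω) ≤ u then (1 : ℝ) else 0) / N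
          - (ρ (Metric.closedBall a u)).toReal| ∂μ)
      ≤ 3 / Real.sqrt N := by
  have : Nonempty (Fin N) := ⟨⟨0, hN⟩⟩
  have hdist : Measurable (dist a) := measurable_const.dist measurable_id
  set ν := ρ.map (dist a)
  have : IsProbabilityMeasure ν := Measure.isProbabilityMeasure_map hdist.aemeasurable
  have hdev : ∀ ω u, |(∑ i : Fin N, if dist a (X i ω) ≤ u then (1 : ℝ) else 0) / N
      - (ρ (Metric.closedBall a u)).toReal| = empiricalDev ν (Set.Iic u) (dist a <| X · ω) := by
    intro ω u
    have hball : dist a ⁻¹' Set.Iic u = Metric.closedBall a u := by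
      ext x; simp [dist_comm]
    simp [empiricalDev, ν, Set.indicator_apply, map_measureReal_apply hdist measurableSet_Iic,
      hball, measureReal_def]
  calc _ = ∫ ω, ⨆ u, empiricalDev ν (Set.Iic u) (dist a <| X · ω) ∂μ := by simp_rw [hdev]
    _ ≤ √(8 / Fintype.card (Fin N)) := integral_iSup_empiricalDev_Iic_le
        (fun i => hdist.comp (hmeas i)) (hindep.comp _ fun _ => hdist)
        fun i => (Measure.map_map hdist (hmeas i)).symm.trans (by rw [hlaw i])
    _ ≤ 3 / √N := by
        rw [Fintype.card_fin, Real.sqrt_div' _ (Nat.cast_nonneg N)]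
        gcongr
        rw [Real.sqrt_le_left zero_le_three]
        norm_num
end

section
/- Let Y₁,…,Y_N (N ≥ 2) be i.i.d. real random variables with a diffuse common law (no atoms). With K(x) = (1/2)sign(x), define Λ^N = (1/N)∑_{i=1}^N | (1/(N-1))∑_{j≠i} K(Y_i - Y_j) - E[K(Y_i - Y)| Y_i] |, where Y is an independent copy of Y₁. Then for all α > 0, P(Λ^N ≥ α) ≤ 2N e^{-2α²(N-1)}. -/
open MeasureTheory ProbabilityTheory Finset

/-!
A union bound reduces the claim to one summand `i`. Conditionally on `Y i = a`, that summand is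
the centred empirical mean of the `N - 1` independent variables `K (a - Y j) ∈ [-1/2, 1/2]`,
`j ≠ i`, whose common mean is `∫ K (a - y) dρ`; Hoeffding's inequality bounds its tail by
`2 exp (-2 α² (N - 1))` uniformly in `a`. The conditioning is carried out through the
independence of `Y i` from `(Y j)_{j ≠ i}` and Fubini.
-/

open Real

@[fun_prop]
lemma measurable_K : Measurable K :=
  (measurable_const.ite measurableSet_Iio
    (measurable_const.ite measurableSet_Ioi measurable_const)).div_const 2

lemma K_mem_Icc (x : ℝ) : K x ∈ Set.Icc (-(1 / 2)) (1 / 2) := by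
  rcases Real.sign_apply_eq x with h | h | h <;> norm_num [K, h]

lemma measurable_integral_K (ρ : Measure ℝ) [SFinite ρ] :
    Measurable fun a ↦ ∫ y, K (a - y) ∂ρ :=
  (show Measurable fun p : ℝ × ℝ ↦ K (p.1 - p.2) by fun_prop).stronglyMeasurable
    |>.integral_prod_right' |>.measurable

lemma le_abs_sum_sub_of_le_abs_average {ι : Type*} (s : Finset ι) (f : ι → ℝ) {c t : ℝ}
    (h : t ≤ |1 / (#s : ℝ) * ∑ i ∈ s, f i - c|) : #s * t ≤ |∑ i ∈ s, (f i - c)| := by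
  rcases eq_or_ne (#s : ℝ) 0 with hs | hs
  · simp [hs]
  have hsum : ∑ i ∈ s, (f i - c) = #s * (1 / (#s : ℝ) * ∑ i ∈ s, f i - c) := by
    rw [sum_sub_distrib, sum_const, nsmul_eq_mul]; field_simp
  rw [hsum, abs_mul, Nat.abs_cast]
  exact mul_le_mul_of_nonneg_left h (Nat.cast_nonneg _)

lemma Finset.exists_le_of_le_average {ι : Type*} {s : Finset ι} {f : ι → ℝ} {α : ℝ} (hα : 0 < α)
    (h : α ≤ 1 / (#s : ℝ) * ∑ i ∈ s, f i) : ∃ i ∈ s, α ≤ f i := by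
  have hs : s.Nonempty := by
    rw [nonempty_iff_ne_empty]; rintro rfl; simp [hα.not_ge] at h
  refine exists_le_of_sum_le hs ?_
  rw [sum_const, nsmul_eq_mul]
  rwa [one_div, ← div_eq_inv_mul, le_div_iff₀' (by positivity)] at h

lemma ProbabilityTheory.HasSubgaussianMGF.measureReal_abs_ge_le {Ω : Type*}
    {mΩ : MeasurableSpace Ω} {μ : Measure Ω} {X : Ω → ℝ} {c : NNReal}
    (h : HasSubgaussianMGF X c μ) {ε : ℝ} (hε : 0 ≤ ε) :
    μ.real {ω | ε ≤ |X ω|} ≤ 2 * exp (-ε ^ 2 / (2 * c)) := by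
  have hsplit : {ω | ε ≤ |X ω|} = {ω | ε ≤ X ω} ∪ {ω | ε ≤ (-X) ω} := by
    ext ω; simp only [le_abs, Set.mem_ofPred_eq, Set.mem_union, Pi.neg_apply]
  calc μ.real {ω | ε ≤ |X ω|} ≤ μ.real {ω | ε ≤ X ω} + μ.real {ω | ε ≤ (-X) ω} :=
        hsplit ▸ measureReal_union_le _ _
    _ ≤ 2 * exp (-ε ^ 2 / (2 * c)) := by
        linarith [h.measure_ge_le hε, h.neg.measure_ge_le hε]

section

variable {Ω : Type*} {mΩ : MeasurableSpace Ω} {μ : Measure Ω} [IsProbabilityMeasure μ]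

lemma measureReal_abs_sum_sub_integral_ge_le {ι : Type*} {X : ι → Ω → ℝ}
    (h_indep : iIndepFun X μ) (h_meas : ∀ i, AEMeasurable (X i) μ) {a b : ℝ}
    (h_bdd : ∀ i, ∀ᵐ ω ∂μ, X i ω ∈ Set.Icc a b) (s : Finset ι) {t : ℝ} (ht : 0 ≤ t) :
    μ.real {ω | #s * t ≤ |∑ i ∈ s, (X i ω - μ[X i])|}
      ≤ 2 * exp (-2 * #s * t ^ 2 / (b - a) ^ 2) := by
  have h_centered : iIndepFun (fun i ω ↦ X i ω - μ[X i]) μ :=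
    h_indep.comp (fun i (x : ℝ) ↦ x - ∫ ω, X i ω ∂μ) fun _ ↦ measurable_id.sub_const _
  have h_sum := HasSubgaussianMGF.sum_of_iIndepFun h_centered (s := s)
    fun i _ ↦ hasSubgaussianMGF_of_mem_Icc (h_meas i) (h_bdd i)
  refine (h_sum.measureReal_abs_ge_le (by positivity)).trans_eq ?_
  congr 2
  push_cast
  simp only [sum_const, nsmul_eq_mul, Real.norm_eq_abs, div_pow, sq_abs]
  rcases eq_or_ne (#s : ℝ) 0 with hs | hs
  · simp [hs]
  rcases eq_or_ne (b - a) 0 with hab | hab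
  · simp [hab]
  field_simp

lemma ProbabilityTheory.IndepFun.measure_prodMk_mem_le {α β : Type*} [MeasurableSpace α]
    [MeasurableSpace β] {X : Ω → α} {Z : Ω → β} (h : X ⟂ᵢ[μ] Z) (hX : Measurable X)
    (hZ : Measurable Z) {S : Set (α × β)} (hS : MeasurableSet S) {ε : ENNReal}
    (hε : ∀ a, μ {ω | (a, Z ω) ∈ S} ≤ ε) :
    μ {ω | (X ω, Z ω) ∈ S} ≤ ε := by
  have hlaw := (indepFun_iff_map_prod_eq_prod_map_map hX.aemeasurable hZ.aemeasurable).1 h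
  calc μ {ω | (X ω, Z ω) ∈ S}
      = ∫⁻ a, μ.map Z (Prod.mk a ⁻¹' S) ∂μ.map X := by
        rw [← Measure.prod_apply hS, ← hlaw, Measure.map_apply (hX.prodMk hZ) hS]; rfl
    _ ≤ ∫⁻ _, ε ∂μ.map X := lintegral_mono fun a ↦ by
        rw [Measure.map_apply hZ (measurable_prodMk_left hS)]; exact hε a
    _ = ε := by simp [Measure.map_apply hX MeasurableSet.univ]

variable {ι : Type*} {ρ : Measure ℝ} {Y : ι → Ω → ℝ}

lemma measure_abs_average_K_sub_integral_ge_le (hmeas : ∀ i, Measurable (Y i))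
    (hindep : iIndepFun Y μ) (hlaw : ∀ i, μ.map (Y i) = ρ) (s : Finset ι) (a : ℝ)
    {α : ℝ} (hα : 0 ≤ α) :
    μ {ω | α ≤ |1 / (#s : ℝ) * ∑ j ∈ s, K (a - Y j ω) - ∫ y, K (a - y) ∂ρ|}
      ≤ ENNReal.ofReal (2 * exp (-2 * α ^ 2 * #s)) := by
  have hKa : Measurable fun y ↦ K (a - y) := by fun_prop
  have hmean : ∀ j, ∫ ω, K (a - Y j ω) ∂μ = ∫ y, K (a - y) ∂ρ := fun j ↦ by
    rw [← hlaw j, integral_map (hmeas j).aemeasurable hKa.aestronglyMeasurable]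
  have hoeffding := measureReal_abs_sum_sub_integral_ge_le (X := fun j ω ↦ K (a - Y j ω))
    (hindep.comp (fun _ y ↦ K (a - y)) fun _ ↦ hKa)
    (fun j ↦ (hKa.comp (hmeas j)).aemeasurable)
    (fun j ↦ ae_of_all _ fun ω ↦ K_mem_Icc _) s hα
  simp only [hmean] at hoeffding
  calc μ {ω | α ≤ |1 / (#s : ℝ) * ∑ j ∈ s, K (a - Y j ω) - ∫ y, K (a - y) ∂ρ|}
      ≤ μ {ω | #s * α ≤ |∑ j ∈ s, (K (a - Y j ω) - ∫ y, K (a - y) ∂ρ)|} :=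
        measure_mono fun ω ↦ le_abs_sum_sub_of_le_abs_average s _
    _ = ENNReal.ofReal (μ.real {ω | #s * α ≤ |∑ j ∈ s, (K (a - Y j ω) - ∫ y, K (a - y) ∂ρ)|}) :=
        (ofReal_measureReal (measure_ne_top _ _)).symm
    _ ≤ ENNReal.ofReal (2 * exp (-2 * α ^ 2 * #s)) :=
        ENNReal.ofReal_le_ofReal (hoeffding.trans_eq (by ring_nf))

lemma measure_abs_average_K_self_sub_integral_ge_le [SFinite ρ] (hmeas : ∀ i, Measurable (Y i))
    (hindep : iIndepFun Y μ) (hlaw : ∀ i, μ.map (Y i) = ρ) {i : ι} {s : Finset ι} (hi : i ∉ s)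
    {α : ℝ} (hα : 0 ≤ α) :
    μ {ω | α ≤ |1 / (#s : ℝ) * ∑ j ∈ s, K (Y i ω - Y j ω) - ∫ y, K (Y i ω - y) ∂ρ|}
      ≤ ENNReal.ofReal (2 * exp (-2 * α ^ 2 * #s)) := by
  have hindep_rest : Y i ⟂ᵢ[μ] fun ω (j : s) ↦ Y j ω :=
    (hindep.indepFun_finset {i} s (disjoint_singleton_left.2 hi) hmeas).comp
      (measurable_pi_apply (⟨i, mem_singleton_self i⟩ : ({i} : Finset ι))) measurable_id
  set S := {p : ℝ × (s → ℝ) | α ≤ |1 / (#s : ℝ) * ∑ j, K (p.1 - p.2 j) - ∫ y, K (p.1 - y) ∂ρ|}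
  have hS : MeasurableSet S := by
    refine measurableSet_le measurable_const (Measurable.abs ?_)
    exact ((Finset.measurable_sum _ fun j _ ↦ by fun_prop).const_mul _).sub
      ((measurable_integral_K ρ).comp measurable_fst)
  have hmem (a : ℝ) (ω : Ω) : (a, fun j : s ↦ Y j ω) ∈ S ↔
      α ≤ |1 / (#s : ℝ) * ∑ j ∈ s, K (a - Y j ω) - ∫ y, K (a - y) ∂ρ| := by
    simp only [S, Set.mem_ofPred_eq, Finset.sum_coe_sort s fun j ↦ K (a - Y j ω)]
  simpa only [hmem] using
    hindep_rest.measure_prodMk_mem_le (hmeas i) (measurable_pi_lambda _ fun j ↦ hmeas j) hS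
      fun a ↦ by simpa only [hmem] using
        measure_abs_average_K_sub_integral_ge_le hmeas hindep hlaw s a hα

end

theorem stmt_12_general {Ω : Type*} [MeasurableSpace Ω] (μ : Measure Ω) [IsProbabilityMeasure μ]
    (N : ℕ)
    (ρ : Measure ℝ) [IsProbabilityMeasure ρ]
    (Y : Fin N → Ω → ℝ)
    (hmeas : ∀ i, Measurable (Y i))
    (hindep : iIndepFun Y μ)
    (hlaw : ∀ i, Measure.map (Y i) μ = ρ)
    (α : ℝ) (hα : 0 < α) :
    μ {ω | α ≤ (1 / N : ℝ) * ∑ i : Fin N,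
        |(1 / (N - 1 : ℝ)) * (∑ j ∈ Finset.univ.erase i, K (Y i ω - Y j ω))
          - ∫ y : ℝ, K (Y i ω - y) ∂ρ|}
      ≤ ENNReal.ofReal (2 * N * Real.exp (-2 * α ^ 2 * (N - 1 : ℝ))) := by
  set D : Fin N → Ω → ℝ := fun i ω ↦ (1 / (N - 1 : ℝ)) * (∑ j ∈ univ.erase i, K (Y i ω - Y j ω))
    - ∫ y : ℝ, K (Y i ω - y) ∂ρ
  set ε := ENNReal.ofReal (2 * Real.exp (-2 * α ^ 2 * (N - 1 : ℝ)))
  have hD (i : Fin N) : μ {ω | α ≤ |D i ω|} ≤ ε := by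
    have hcard : (#(univ.erase i) : ℝ) = N - 1 := by
      rw [card_erase_of_mem (mem_univ i), card_univ, Fintype.card_fin, Nat.cast_pred i.pos]
    simpa only [hcard] using measure_abs_average_K_self_sub_integral_ge_le hmeas hindep hlaw
      (notMem_erase i univ) hα.le
  calc μ {ω | α ≤ 1 / N * ∑ i, |D i ω|}
      ≤ μ (⋃ i, {ω | α ≤ |D i ω|}) := measure_mono fun ω hω ↦ by
        obtain ⟨i, -, hi⟩ := exists_le_of_le_average (s := univ) (f := fun i ↦ |D i ω|) hα
          (by rwa [card_univ, Fintype.card_fin])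
        exact Set.mem_iUnion.2 ⟨i, hi⟩
    _ ≤ ∑ i, μ {ω | α ≤ |D i ω|} := measure_iUnion_fintype_le _ _
    _ ≤ ∑ _i : Fin N, ε := sum_le_sum fun i _ ↦ hD i
    _ = ENNReal.ofReal (2 * N * Real.exp (-2 * α ^ 2 * (N - 1 : ℝ))) := by
      rw [sum_const, card_univ, Fintype.card_fin, nsmul_eq_mul, ← ENNReal.ofReal_natCast,
        ← ENNReal.ofReal_mul (Nat.cast_nonneg _)]
      ring_nf

theorem stmt_12 {Ω : Type*} [MeasurableSpace Ω] (μ : Measure Ω) [IsProbabilityMeasure μ]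
    (N : ℕ) (hN : 2 ≤ N)
    (ρ : Measure ℝ) [IsProbabilityMeasure ρ] [NullSingletonClass ρ]
    (Y : Fin N → Ω → ℝ)
    (hmeas : ∀ i, Measurable (Y i))
    (hindep : iIndepFun Y μ)
    (hlaw : ∀ i, Measure.map (Y i) μ = ρ)
    (α : ℝ) (hα : 0 < α) :
    μ {ω | α ≤ (1 / N : ℝ) * ∑ i : Fin N,
        |(1 / (N - 1 : ℝ)) * (∑ j ∈ Finset.univ.erase i, K (Y i ω - Y j ω))
          - ∫ y : ℝ, K (Y i ω - y) ∂ρ|}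
      ≤ ENNReal.ofReal (2 * N * Real.exp (-2 * α ^ 2 * (N - 1 : ℝ))) :=
  stmt_12_general μ N ρ Y hmeas hindep hlaw α hα
end

section
/- Let ε, α > 0, R > 0, and let Y₁,…,Y_N be i.i.d. real random variables with common law ρ having bounded Lebesgue density (also denoted ρ). Let ρ^N = (1/N)∑ δ_{Y_i}. Then with δ = εα/(2‖ρ‖_∞), P( sup_{x ∈ [-R,R]} ρ^N(B(x,ε))/(2ε) ≥ ‖ρ‖_∞ + α ) ≤ (2R‖ρ‖_∞/(εα) + 2) e^{-2N(εα)²}. -/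
open MeasureTheory ProbabilityTheory Finset

/-!
Put grid points `c` at spacing `2δ` across `[-R, R]`. A ball `B(x, ε)` with `|x| ≤ R` lies in
`B(c, ε + δ)` for the nearest grid point `c`, and the number of samples in `B(c, ε + δ)` is
binomial with success probability at most `p = 2(ε + δ)C`, where `C` bounds the density.
The choice `δ = εα / (2C)` makes the threshold `2εN(C + α)` equal to `Np + Nεα`, so
Hoeffding's inequality bounds each grid event by `exp(-2N(εα)²)`, and a union bound over the
at most `R/δ + 2` grid points concludes.
-/

theorem withDensity_ofReal_Icc_le {f : ℝ → ℝ} {C : ℝ} (hC : 0 ≤ C) (hfC : ∀ x, f x ≤ C)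
    (a b : ℝ) :
    volume.withDensity (fun y ↦ ENNReal.ofReal (f y)) (Set.Icc a b)
      ≤ ENNReal.ofReal (C * (b - a)) := by
  rw [withDensity_apply _ measurableSet_Icc]
  calc ∫⁻ y in Set.Icc a b, ENNReal.ofReal (f y)
      ≤ ∫⁻ _ in Set.Icc a b, ENNReal.ofReal C :=
        lintegral_mono fun y ↦ ENNReal.ofReal_le_ofReal (hfC y)
    _ = ENNReal.ofReal (C * (b - a)) := by
        rw [setLIntegral_const, Real.volume_Icc, ENNReal.ofReal_mul hC]

section

variable {Ω : Type*} [MeasurableSpace Ω] {μ : Measure Ω}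

theorem measure_sum_ge_le_of_iIndepFun_of_mem_Icc_zero_one [IsProbabilityMeasure μ]
    {ι : Type*} [Fintype ι] {X : ι → Ω → ℝ}
    (hindep : iIndepFun X μ) (hmeas : ∀ i, Measurable (X i))
    (hX : ∀ i ω, X i ω ∈ Set.Icc (0 : ℝ) 1) {p t : ℝ} (hp : ∀ i, μ[X i] ≤ p) (ht : 0 ≤ t) :
    μ {ω | Fintype.card ι * p + Fintype.card ι * t ≤ ∑ i, X i ω}
      ≤ ENNReal.ofReal (Real.exp (-2 * Fintype.card ι * t ^ 2)) := by
  set n : ℕ := Fintype.card ι with hn_def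
  have hcentered : iIndepFun (fun i ↦ (fun x ↦ x - μ[X i]) ∘ X i) μ :=
    hindep.comp (fun i x ↦ x - μ[X i]) fun _ ↦ measurable_id.sub_const _
  have hsubG : ∀ i ∈ (univ : Finset ι),
      HasSubgaussianMGF (fun ω ↦ X i ω - μ[X i]) ((‖(1 : ℝ) - 0‖₊ / 2) ^ 2) μ :=
    fun i _ ↦ hasSubgaussianMGF_of_mem_Icc (hmeas i).aemeasurable (ae_of_all _ (hX i))
  have hhoeffding := HasSubgaussianMGF.measure_sum_ge_le_of_iIndepFun hcentered hsubG
    (mul_nonneg (Nat.cast_nonneg n) ht)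
  have hevent : {ω | n * p + n * t ≤ ∑ i, X i ω}
      ⊆ {ω | n * t ≤ ∑ i, (X i ω - μ[X i])} := by
    intro ω hω
    have hmean : ∑ i, μ[X i] ≤ n * p := by
      simpa [n] using sum_le_sum fun i (_ : i ∈ univ) ↦ hp i
    simp only [Set.mem_ofPred_eq, sum_sub_distrib] at hω ⊢
    linarith
  calc μ {ω | n * p + n * t ≤ ∑ i, X i ω}
      ≤ μ {ω | n * t ≤ ∑ i, (X i ω - μ[X i])} := measure_mono hevent
    _ = ENNReal.ofReal (μ.real {ω | n * t ≤ ∑ i, (X i ω - μ[X i])}) :=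
        (ofReal_measureReal).symm
    _ ≤ ENNReal.ofReal (Real.exp (-2 * n * t ^ 2)) := by
        refine ENNReal.ofReal_le_ofReal (hhoeffding.trans_eq ?_)
        rcases eq_or_ne n 0 with hn | hn
        · simp [hn]
        · simp only [sum_const, card_univ, ← hn_def, nsmul_eq_mul, sub_zero, nnnorm_one]
          push_cast
          field_simp

theorem integral_ite_abs_sub_le_le {Y : Ω → ℝ} (hY : Measurable Y) {f : ℝ → ℝ} {C : ℝ}
    (hC : 0 ≤ C) (hfC : ∀ x, f x ≤ C)
    (hlaw : μ.map Y = volume.withDensity (fun y ↦ ENNReal.ofReal (f y)))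
    (c : ℝ) {r : ℝ} (hr : 0 ≤ r) :
    μ[fun ω ↦ if |Y ω - c| ≤ r then (1 : ℝ) else 0] ≤ 2 * r * C := by
  have hind : (fun ω ↦ if |Y ω - c| ≤ r then (1 : ℝ) else 0)
      = (Y ⁻¹' Set.Icc (c - r) (c + r)).indicator 1 := by
    ext ω
    simp only [Set.indicator, Set.mem_preimage, Set.mem_Icc, Pi.one_apply, abs_sub_le_iff,
      sub_le_iff_le_add, add_comm r, and_comm]
  have hprob : μ (Y ⁻¹' Set.Icc (c - r) (c + r)) ≤ ENNReal.ofReal (2 * r * C) := by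
    rw [← Measure.map_apply hY measurableSet_Icc, hlaw]
    exact (withDensity_ofReal_Icc_le hC hfC _ _).trans_eq (by ring_nf)
  rw [hind, integral_indicator_one (hY measurableSet_Icc), measureReal_def]
  exact ENNReal.toReal_le_of_le_ofReal (by positivity) hprob

end

noncomputable def countWithin {ι : Type*} [Fintype ι] (y : ι → ℝ) (c r : ℝ) : ℝ :=
  ∑ i, if |y i - c| ≤ r then 1 else 0

theorem countWithin_le_of_abs_sub_le {ι : Type*} [Fintype ι] (y : ι → ℝ) {x c δ : ℝ}
    (h : |x - c| ≤ δ) (ε : ℝ) : countWithin y x ε ≤ countWithin y c (ε + δ) := by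
  refine sum_le_sum fun i _ ↦ ?_
  split_ifs with hx hc <;> try norm_num
  exact hc <| (abs_sub_le _ _ _).trans (add_le_add hx h)

noncomputable def gridCenters (δ R : ℝ) : Finset ℝ :=
  (Finset.Icc (-round (R / (2 * δ))) (round (R / (2 * δ)))).image fun k : ℤ ↦ 2 * k * δ

theorem exists_mem_gridCenters_abs_sub_le {δ R x : ℝ} (hδ : 0 < δ) (hx : x ∈ Set.Icc (-R) R) :
    ∃ c ∈ gridCenters δ R, |x - c| ≤ δ := by
  have h2δ : 0 < 2 * δ := by positivity
  set m := round (R / (2 * δ))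
  set k := round (x / (2 * δ))
  have hxk := abs_sub_round (x / (2 * δ))
  have hkx := sub_half_lt_round (x / (2 * δ))
  have hRm := sub_half_lt_round (R / (2 * δ))
  have hxR : |x / (2 * δ)| ≤ R / (2 * δ) := by
    rw [abs_div, abs_of_pos h2δ]; exact div_le_div_of_nonneg_right (abs_le.mpr hx) h2δ.le
  have hlt : (-m - 1 : ℝ) < k ∧ (k : ℝ) < m + 1 := by
    constructor <;> linarith [abs_le.mp hxk, abs_le.mp hxR]
  have hk : -m ≤ k ∧ k ≤ m := by
    constructor
    · have : -m - 1 < k := by exact_mod_cast hlt.1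
      omega
    · have : k < m + 1 := by exact_mod_cast hlt.2
      omega
  refine ⟨2 * k * δ, mem_image.mpr ⟨k, mem_Icc.mpr hk, rfl⟩, ?_⟩
  calc |x - 2 * k * δ| = 2 * δ * |x / (2 * δ) - k| := by
        rw [← abs_of_pos h2δ, ← abs_mul, abs_of_pos h2δ]; congr 1; field_simp
    _ ≤ 2 * δ * (1 / 2) := by gcongr
    _ = δ := by ring

theorem card_gridCenters_le {δ R : ℝ} (hδ : 0 < δ) (hR : 0 ≤ R) :
    (#(gridCenters δ R) : ℝ) ≤ R / δ + 2 := by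
  set m := round (R / (2 * δ))
  have hm : (m : ℝ) ≤ R / (2 * δ) + 1 / 2 := by
    linarith [(abs_le.mp (abs_sub_round (R / (2 * δ)))).1]
  have hm0 : 0 ≤ m := by
    have hRm := sub_half_lt_round (R / (2 * δ))
    have : (-1 : ℝ) < m := by linarith [div_nonneg hR (by positivity : (0 : ℝ) ≤ 2 * δ)]
    have : (-1 : ℤ) < m := by exact_mod_cast this
    omega
  have hcard : (#(Finset.Icc (-m) m) : ℤ) = 2 * m + 1 := by
    rw [Int.card_Icc]; omega
  calc (#(gridCenters δ R) : ℝ) ≤ #(Finset.Icc (-m) m) := by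
        exact_mod_cast card_image_le
    _ = 2 * m + 1 := by exact_mod_cast hcard
    _ ≤ R / δ + 2 := by
        have : R / (2 * δ) = R / δ / 2 := by ring
        linarith

theorem exists_mem_le_countWithin_of_le_iSup {ι : Type*} [Fintype ι] (y : ι → ℝ) {s : Set ℝ}
    [Nonempty s] {S : Finset ℝ} {δ : ℝ} (hS : ∀ x ∈ s, ∃ c ∈ S, |x - c| ≤ δ) {φ : ℝ → ℝ}
    (hφ : Monotone φ) {a ε : ℝ} (ha : a ≤ ⨆ x : s, φ (countWithin y x ε)) :
    ∃ c ∈ S, a ≤ φ (countWithin y c (ε + δ)) := by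
  obtain ⟨x₀⟩ := ‹Nonempty s›
  obtain ⟨c₀, hc₀, -⟩ := hS x₀ x₀.2
  obtain ⟨c, hc, hmax⟩ := S.exists_max_image (fun c ↦ countWithin y c (ε + δ)) ⟨c₀, hc₀⟩
  refine ⟨c, hc, ha.trans (ciSup_le fun x ↦ ?_)⟩
  obtain ⟨c', hc', hxc'⟩ := hS x x.2
  exact hφ ((countWithin_le_of_abs_sub_le y hxc' ε).trans (hmax c' hc'))

theorem stmt_13_general {Ω : Type*} [MeasurableSpace Ω] (μ : Measure Ω) [IsProbabilityMeasure μ]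
    (N : ℕ) (hN : 1 ≤ N) (ε α R : ℝ) (hε : 0 < ε) (hα : 0 < α) (hR : 0 < R)
    (f : ℝ → ℝ) (C : ℝ) (hC : 0 < C) (hfC : ∀ x, f x ≤ C)
    (Y : Fin N → Ω → ℝ) (hmeas : ∀ i, Measurable (Y i))
    (hindep : iIndepFun Y μ)
    (hlaw : ∀ i, Measure.map (Y i) μ = volume.withDensity (fun y => ENNReal.ofReal (f y))) :
    μ {ω | C + α ≤ ⨆ x : Set.Icc (-R) R,
        (∑ i : Fin N, if |Y i ω - (x : ℝ)| ≤ ε then (1 : ℝ) else 0) / N / (2 * ε)}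
      ≤ ENNReal.ofReal ((2 * R * C / (ε * α) + 2) * Real.exp (-2 * N * (ε * α) ^ 2)) := by
  set δ := ε * α / (2 * C)
  have hδ : 0 < δ := by positivity
  set p := 2 * (ε + δ) * C
  have hthreshold : (C + α) * (N * (2 * ε)) = N * p + N * (ε * α) := by
    simp only [p, δ]; field_simp; ring
  set tail : ℝ → Set Ω := fun c ↦ {ω | N * p + N * (ε * α) ≤ countWithin (Y · ω) c (ε + δ)}
  have hcover : {ω | C + α ≤ ⨆ x : Set.Icc (-R) R,
      (∑ i : Fin N, if |Y i ω - (x : ℝ)| ≤ ε then (1 : ℝ) else 0) / N / (2 * ε)}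
      ⊆ ⋃ c ∈ gridCenters δ R, tail c := by
    intro ω hω
    have : Nonempty (Set.Icc (-R) R) := ⟨⟨0, by simp [hR.le]⟩⟩
    obtain ⟨c, hc, hle⟩ := exists_mem_le_countWithin_of_le_iSup (Y · ω)
      (fun x hx ↦ exists_mem_gridCenters_abs_sub_le hδ hx)
      (φ := fun t ↦ t / N / (2 * ε)) (fun _ _ h ↦ by dsimp only; gcongr) hω
    rw [div_div, le_div_iff₀ (by positivity), hthreshold] at hle
    exact Set.mem_biUnion hc hle
  have htail (c : ℝ) : μ (tail c) ≤ ENNReal.ofReal (Real.exp (-2 * N * (ε * α) ^ 2)) := by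
    have hind : Measurable fun y : ℝ ↦ if |y - c| ≤ ε + δ then (1 : ℝ) else 0 :=
      Measurable.ite (measurableSet_le (by fun_prop) measurable_const) measurable_const
        measurable_const
    have := measure_sum_ge_le_of_iIndepFun_of_mem_Icc_zero_one
      (hindep.comp (fun _ y ↦ if |y - c| ≤ ε + δ then (1 : ℝ) else 0) fun _ ↦ hind)
      (fun i ↦ hind.comp (hmeas i)) (fun i ω ↦ by dsimp only [Function.comp]; split_ifs <;> simp)
      (fun i ↦ integral_ite_abs_sub_le_le (hmeas i) hC.le hfC (hlaw i) c (by positivity))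
      (by positivity : 0 ≤ ε * α)
    rwa [Fintype.card_fin] at this
  calc _ ≤ μ (⋃ c ∈ gridCenters δ R, tail c) := measure_mono hcover
    _ ≤ ∑ c ∈ gridCenters δ R, μ (tail c) := measure_biUnion_finset_le _ _
    _ ≤ ∑ c ∈ gridCenters δ R, ENNReal.ofReal (Real.exp (-2 * N * (ε * α) ^ 2)) :=
        sum_le_sum fun c _ ↦ htail c
    _ = ENNReal.ofReal (#(gridCenters δ R) * Real.exp (-2 * N * (ε * α) ^ 2)) := by
        rw [sum_const, nsmul_eq_mul, ← ENNReal.ofReal_natCast, ENNReal.ofReal_mul (by positivity)]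
    _ ≤ _ := by
        refine ENNReal.ofReal_le_ofReal (mul_le_mul_of_nonneg_right ?_ (Real.exp_pos _).le)
        refine (card_gridCenters_le hδ hR.le).trans_eq ?_
        simp only [δ]; field_simp

theorem stmt_13 {Ω : Type*} [MeasurableSpace Ω] (μ : Measure Ω) [IsProbabilityMeasure μ]
    (N : ℕ) (hN : 1 ≤ N) (ε α R : ℝ) (hε : 0 < ε) (hα : 0 < α) (hR : 0 < R)
    (f : ℝ → ℝ) (hf_meas : Measurable f) (hf_nonneg : 0 ≤ f)
    (C : ℝ) (hC : 0 < C) (hfC : ∀ x, f x ≤ C)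
    (Y : Fin N → Ω → ℝ) (hmeas : ∀ i, Measurable (Y i))
    (hindep : iIndepFun Y μ)
    (hlaw : ∀ i, Measure.map (Y i) μ = volume.withDensity (fun y => ENNReal.ofReal (f y))) :
    μ {ω | C + α ≤ ⨆ x : Set.Icc (-R) R,
        (∑ i : Fin N, if |Y i ω - (x : ℝ)| ≤ ε then (1 : ℝ) else 0) / N / (2 * ε)}
      ≤ ENNReal.ofReal ((2 * R * C / (ε * α) + 2) * Real.exp (-2 * N * (ε * α) ^ 2)) :=
  stmt_13_general μ N hN ε α R hε hα hR f C hC hfC Y hmeas hindep hlaw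
end

section
/- Let Y₁,…,Y_N be i.i.d. real random variables with common law ρ having bounded density and finite exponential moment M_λ(ρ) = ∫ e^{λ|y|} ρ(dy) < ∞ for some λ > 0. Let ρ^N = (1/N)∑δ_{Y_i} and ‖μ‖_{∞,ε} = sup_x μ([x-ε,x+ε])/(2ε). Then for all ε, α > 0: P( ‖ρ^N‖_{∞,ε} ≥ ‖ρ‖_∞ + α ) ≤ ( 4‖ρ‖_∞ N(εα)/λ + 2 + N M_λ(ρ) ) e^{-2N(εα)²}. -/
/-!
If the empirical measure puts mass `≥ 2ε(C + α)` on some window `[x - ε, x + ε]`, then either some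
sample lies outside `[-R, R]` (probability `≤ N M e^{-λR}` by Markov's inequality for `e^{λ|Y|}`),
or, after clamping `x` to `[-R, R]`, the window lies in one of the `⌊2R/δ⌋ + 1` fixed intervals
`[-R + jδ - ε, -R + (j + 1)δ + ε]`, `δ = εα/C`. Each such interval has `ρ`-mass at most
`2εC + εα`, so by Hoeffding's inequality its count exceeds `N(2εC + 2εα)` with probability
`≤ e^{-2N(εα)²}`. The choice `R = 2N(εα)²/λ` makes `e^{-λR} = e^{-2N(εα)²}`, and there are
at most `4CNεα/λ + 1` intervals.
-/

open MeasureTheory ProbabilityTheory Finset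

theorem exists_grid_Icc_superset {R δ ε : ℝ} (hR : 0 ≤ R) (hδ : 0 < δ) (x : ℝ) :
    ∃ j ∈ range (⌊2 * R / δ⌋₊ + 1), ∀ y, |y| ≤ R → |y - x| ≤ ε →
      y ∈ Set.Icc (-R + j * δ - ε) (-R + j * δ + ε + δ) := by
  have hRR : -R ≤ R := by linarith
  set x₁ : ℝ := (Set.projIcc (-R) R hRR x).1
  have hx₁ : x₁ ∈ Set.Icc (-R) R := (Set.projIcc (-R) R hRR x).2
  have hj : (⌊(x₁ + R) / δ⌋₊ : ℝ) * δ ≤ x₁ + R ∧ x₁ + R < (⌊(x₁ + R) / δ⌋₊ + 1) * δ := by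
    have h0 : 0 ≤ (x₁ + R) / δ := div_nonneg (by linarith [hx₁.1]) hδ.le
    constructor
    · exact (le_div_iff₀ hδ).mp (Nat.floor_le h0)
    · exact (div_lt_iff₀ hδ).mp (Nat.lt_floor_add_one _)
  refine ⟨⌊(x₁ + R) / δ⌋₊, mem_range.mpr (Nat.lt_succ_of_le (Nat.floor_le_floor ?_)), ?_⟩
  · gcongr; linarith [hx₁.2]
  intro y hy hyx
  have hyx₁ : |y - x₁| ≤ ε := by
    have hy' : y ∈ Set.Icc (-R) R := abs_le.mp hy
    calc |y - x₁| = |(Set.projIcc (-R) R hRR y : ℝ) - x₁| := by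
          rw [Set.projIcc_of_mem hRR hy']
      _ ≤ |y - x| := Set.abs_projIcc_sub_projIcc hRR
      _ ≤ ε := hyx
  have := abs_le.mp hyx₁
  constructor <;> linarith [hj.1, hj.2]

theorem exists_le_of_le_ciSup_of_finite_range {α : Type*} [Nonempty α] {g : α → ℝ}
    (hg : (Set.range g).Finite) {c : ℝ} (hc : c ≤ ⨆ x, g x) : ∃ x, c ≤ g x := by
  obtain ⟨x, hx⟩ := (Set.range_nonempty g).csSup_mem hg
  exact ⟨x, hx ▸ hc⟩

theorem finite_range_sum_ite {α ι : Type*} [Fintype ι] (P : ι → α → Prop)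
    [∀ i x, Decidable (P i x)] (h : ℝ → ℝ) :
    (Set.range fun x => h (∑ i, if P i x then (1 : ℝ) else 0)).Finite := by
  classical
  refine (Set.finite_range fun Q : ι → Prop => h (∑ i, if Q i then (1 : ℝ) else 0)).subset ?_
  rintro _ ⟨x, rfl⟩
  exact ⟨fun i => P i x, by beta_reduce; congr!⟩

theorem exists_lt_abs_or_exists_grid_le_sum_indicator {ι : Type*} [Fintype ι] {y : ι → ℝ}
    {R δ ε c : ℝ} (hR : 0 ≤ R) (hδ : 0 < δ) (hε : 0 ≤ ε)
    (hc : c ≤ ⨆ x, (∑ i, if |y i - x| ≤ ε then (1 : ℝ) else 0) / Fintype.card ι / (2 * ε)) :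
    (∃ i, R < |y i|) ∨ ∃ j ∈ range (⌊2 * R / δ⌋₊ + 1), c * (Fintype.card ι * (2 * ε))
      ≤ ∑ i, (Set.Icc (-R + j * δ - ε) (-R + j * δ + ε + δ)).indicator 1 (y i) := by
  by_cases! hy : ∃ i, R < |y i|
  · exact Or.inl hy
  obtain ⟨x, hx⟩ := exists_le_of_le_ciSup_of_finite_range
    (finite_range_sum_ite (fun i x => |y i - x| ≤ ε) (fun s => s / Fintype.card ι / (2 * ε))) hc
  obtain ⟨j, hj, hgrid⟩ := exists_grid_Icc_superset hR hδ x (ε := ε)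
  refine Or.inr ⟨j, hj, ?_⟩
  rw [div_div] at hx
  refine (mul_le_of_le_div₀ (sum_nonneg fun i _ => by positivity) (by positivity) hx).trans
    (sum_le_sum fun i _ => ?_)
  split_ifs with h
  · simp [hgrid _ (hy i) h]
  · exact Set.indicator_nonneg (fun _ _ => zero_le_one) _

theorem measureReal_sum_indicator_ge_le_of_iIndepFun {Ω ι : Type*} [MeasurableSpace Ω]
    {μ : Measure Ω} [IsProbabilityMeasure μ] [Fintype ι] {Y : ι → Ω → ℝ}
    (hmeas : ∀ i, Measurable (Y i)) (hindep : iIndepFun Y μ) {S : Set ℝ} (hS : MeasurableSet S)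
    {p t : ℝ} (hp : ∀ i, μ.real (Y i ⁻¹' S) ≤ p) (ht : 0 ≤ t) :
    μ.real {ω | Fintype.card ι * (p + t) ≤ ∑ i, S.indicator 1 (Y i ω)}
      ≤ Real.exp (-2 * Fintype.card ι * t ^ 2) := by
  set Z : ι → Ω → ℝ := fun i ω => S.indicator 1 (Y i ω)
  have hZ i : Measurable (Z i) := (measurable_one.indicator hS).comp (hmeas i)
  have hmean i : μ[Z i] = μ.real (Y i ⁻¹' S) := by
    simp only [Z, ← Set.indicator_comp_right]
    exact integral_indicator_one (hmeas i hS)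
  have hsubG : ∀ i ∈ (univ : Finset ι),
      HasSubgaussianMGF (fun ω => Z i ω - μ[Z i]) ((‖(1 : ℝ) - 0‖₊ / 2) ^ 2) μ :=
    fun i _ => hasSubgaussianMGF_of_mem_Icc (hZ i).aemeasurable (ae_of_all _ fun ω =>
      ⟨Set.indicator_nonneg (fun _ _ => zero_le_one) _,
        Set.indicator_le_self' (fun _ _ => zero_le_one) _⟩)
  have hindepZ : iIndepFun (fun i ω => Z i ω - μ[Z i]) μ :=
    hindep.comp (fun i (y : ℝ) => S.indicator (1 : ℝ → ℝ) y - ∫ ω, Z i ω ∂μ)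
      (fun i => (measurable_one.indicator hS).sub_const _)
  have hhoeff := HasSubgaussianMGF.measure_sum_ge_le_of_iIndepFun hindepZ hsubG
    (ε := Fintype.card ι * t) (by positivity)
  calc μ.real {ω | Fintype.card ι * (p + t) ≤ ∑ i, Z i ω}
      ≤ μ.real {ω | Fintype.card ι * t ≤ ∑ i, (Z i ω - μ[Z i])} := by
        refine measureReal_mono fun ω hω => ?_
        have : ∑ i, μ[Z i] ≤ Fintype.card ι * p := by
          simpa [hmean] using sum_le_sum fun i (_ : i ∈ univ) => hp i
        simp only [Set.mem_ofPred_eq, sum_sub_distrib] at hω ⊢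
        linarith
    _ ≤ _ := hhoeff
    _ = Real.exp (-2 * Fintype.card ι * t ^ 2) := by
        congr 1
        simp only [nnnorm_one, sub_zero, sum_const, card_univ, nsmul_eq_mul]
        push_cast
        rcases eq_or_ne (Fintype.card ι : ℝ) 0 with hn | hn
        · simp [hn]
        · field_simp

section Density

variable {Ω : Type*} [MeasurableSpace Ω] {μ : Measure Ω} {X : Ω → ℝ} {f : ℝ → ℝ}

theorem measureReal_preimage_Icc_le_of_map_eq_withDensity (hX : Measurable X)
    (hlaw : μ.map X = volume.withDensity fun y => ENNReal.ofReal (f y))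
    {C : ℝ} (hC : 0 ≤ C) (hfC : ∀ x, f x ≤ C) {a b : ℝ} (hab : a ≤ b) :
    μ.real (X ⁻¹' Set.Icc a b) ≤ C * (b - a) := by
  rw [← map_measureReal_apply hX measurableSet_Icc, hlaw]
  refine ENNReal.toReal_le_of_le_ofReal (mul_nonneg hC (sub_nonneg.mpr hab)) ?_
  rw [withDensity_apply _ measurableSet_Icc, ENNReal.ofReal_mul hC, ← Real.volume_Icc]
  calc ∫⁻ y in Set.Icc a b, ENNReal.ofReal (f y)
      ≤ ∫⁻ _ in Set.Icc a b, ENNReal.ofReal C :=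
        lintegral_mono fun y => ENNReal.ofReal_le_ofReal (hfC y)
    _ = _ := setLIntegral_const _ _

theorem measureReal_lt_abs_le_of_map_eq_withDensity (hX : Measurable X)
    (hlaw : μ.map X = volume.withDensity fun y => ENNReal.ofReal (f y)) (hf : 0 ≤ f)
    {lam : ℝ} (hlam : 0 ≤ lam) (hint : Integrable (fun y => Real.exp (lam * |y|) * f y))
    (R : ℝ) :
    μ.real {ω | R < |X ω|} ≤ (∫ y, Real.exp (lam * |y|) * f y) * Real.exp (-(lam * R)) := by
  have hms : MeasurableSet {y : ℝ | R < |y|} := measurableSet_lt measurable_const measurable_abs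
  have hpos y : 0 ≤ Real.exp (lam * |y|) * f y := mul_nonneg (Real.exp_pos _).le (hf y)
  rw [show {ω | R < |X ω|} = X ⁻¹' {y | R < |y|} from rfl, ← map_measureReal_apply hX hms, hlaw]
  refine ENNReal.toReal_le_of_le_ofReal (mul_nonneg (integral_nonneg hpos) (Real.exp_pos _).le) ?_
  rw [withDensity_apply _ hms, mul_comm, ENNReal.ofReal_mul (Real.exp_pos _).le,
    ofReal_integral_eq_lintegral_ofReal hint (ae_of_all _ hpos),
    ← lintegral_const_mul' _ _ ENNReal.ofReal_ne_top]
  calc ∫⁻ y in {y | R < |y|}, ENNReal.ofReal (f y)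
      ≤ ∫⁻ y in {y | R < |y|}, ENNReal.ofReal (Real.exp (-(lam * R)))
          * ENNReal.ofReal (Real.exp (lam * |y|) * f y) := by
        refine setLIntegral_mono' hms fun y hy => ?_
        rw [← ENNReal.ofReal_mul (Real.exp_pos _).le, ← mul_assoc, ← Real.exp_add]
        refine ENNReal.ofReal_le_ofReal (le_mul_of_one_le_left (hf y) (Real.one_le_exp ?_))
        nlinarith [show R < |y| from hy]
    _ ≤ _ := setLIntegral_le_lintegral _ _

end Density

theorem stmt_14_general {Ω : Type*} [MeasurableSpace Ω] (μ : Measure Ω) [IsProbabilityMeasure μ]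
    (N : ℕ) (ε α lam : ℝ) (hε : 0 < ε) (hα : 0 < α) (hlam : 0 < lam)
    (f : ℝ → ℝ) (hf_nonneg : 0 ≤ f)
    (C : ℝ) (hC : 0 < C) (hfC : ∀ x, f x ≤ C)
    (hint : Integrable (fun y => Real.exp (lam * |y|) * f y) volume)
    (Y : Fin N → Ω → ℝ) (hmeas : ∀ i, Measurable (Y i))
    (hindep : iIndepFun Y μ)
    (hlaw : ∀ i, Measure.map (Y i) μ = volume.withDensity (fun y => ENNReal.ofReal (f y))) :
    μ {ω | C + α ≤ ⨆ x : ℝ,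
        (∑ i : Fin N, if |Y i ω - x| ≤ ε then (1 : ℝ) else 0) / N / (2 * ε)}
      ≤ ENNReal.ofReal
          ((4 * C * N * (ε * α) / lam + 2 + N * ∫ y : ℝ, Real.exp (lam * |y|) * f y)
            * Real.exp (-2 * N * (ε * α) ^ 2)) := by
  set M := ∫ y : ℝ, Real.exp (lam * |y|) * f y
  set R := 2 * N * (ε * α) ^ 2 / lam
  set δ := ε * α / C
  set K := ⌊2 * R / δ⌋₊
  set I : ℕ → Set ℝ := fun j => Set.Icc (-R + j * δ - ε) (-R + j * δ + ε + δ)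
  have hR : 0 ≤ R := by positivity
  have hδ : 0 < δ := by positivity
  have hsub : {ω | C + α ≤ ⨆ x : ℝ,
        (∑ i : Fin N, if |Y i ω - x| ≤ ε then (1 : ℝ) else 0) / N / (2 * ε)}
      ⊆ (⋃ i, {ω | R < |Y i ω|}) ∪ ⋃ j ∈ range (K + 1),
          {ω | N * (C * (2 * ε + δ) + ε * α) ≤ ∑ i, (I j).indicator 1 (Y i ω)} := by
    intro ω hω
    rcases exists_lt_abs_or_exists_grid_le_sum_indicator (y := fun i => Y i ω) (c := C + α)
      hR hδ hε.le (by rwa [Fintype.card_fin]) with ⟨i, hi⟩ | ⟨j, hj, hcount⟩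
    · exact Or.inl (Set.mem_iUnion.mpr ⟨i, hi⟩)
    · refine Or.inr (Set.mem_biUnion hj (le_of_eq_of_le ?_ hcount))
      rw [Fintype.card_fin]
      simp only [δ]
      field_simp
      ring
  have htail i : μ.real {ω | R < |Y i ω|} ≤ M * Real.exp (-2 * N * (ε * α) ^ 2) := by
    convert measureReal_lt_abs_le_of_map_eq_withDensity (hmeas i) (hlaw i) hf_nonneg hlam.le
      hint R using 3
    simp only [R]
    field_simp
  have hgrid j : μ.real {ω | N * (C * (2 * ε + δ) + ε * α) ≤ ∑ i, (I j).indicator 1 (Y i ω)}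
      ≤ Real.exp (-2 * N * (ε * α) ^ 2) := by
    simpa using measureReal_sum_indicator_ge_le_of_iIndepFun hmeas hindep measurableSet_Icc
      (fun i => (measureReal_preimage_Icc_le_of_map_eq_withDensity (hmeas i) (hlaw i) hC.le hfC
        (by linarith)).trans_eq (by ring)) (by positivity)
  have hK : (K : ℝ) ≤ 4 * C * N * (ε * α) / lam := by
    refine (Nat.floor_le (by positivity)).trans_eq ?_
    simp only [R, δ]
    field_simp
    ring
  rw [← ofReal_measureReal]
  refine ENNReal.ofReal_le_ofReal ?_
  calc _ ≤ _ := measureReal_mono hsub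
    _ ≤ _ := (measureReal_union_le _ _).trans
        (add_le_add (measureReal_iUnion_fintype_le _) (measureReal_biUnion_finset_le _ _))
    _ ≤ ∑ _i : Fin N, M * Real.exp (-2 * N * (ε * α) ^ 2)
          + ∑ _j ∈ range (K + 1), Real.exp (-2 * N * (ε * α) ^ 2) :=
        add_le_add (sum_le_sum fun i _ => htail i) (sum_le_sum fun j _ => hgrid j)
    _ ≤ _ := by
        simp only [sum_const, card_univ, Fintype.card_fin, card_range, nsmul_eq_mul]
        push_cast
        nlinarith [Real.exp_pos (-2 * N * (ε * α) ^ 2)]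

theorem stmt_14 {Ω : Type*} [MeasurableSpace Ω] (μ : Measure Ω) [IsProbabilityMeasure μ]
    (N : ℕ) (hN : 1 ≤ N) (ε α lam : ℝ) (hε : 0 < ε) (hα : 0 < α) (hlam : 0 < lam)
    (f : ℝ → ℝ) (hf_meas : Measurable f) (hf_nonneg : 0 ≤ f)
    (C : ℝ) (hC : 0 < C) (hfC : ∀ x, f x ≤ C)
    (hint : Integrable (fun y => Real.exp (lam * |y|) * f y) volume)
    (Y : Fin N → Ω → ℝ) (hmeas : ∀ i, Measurable (Y i))
    (hindep : iIndepFun Y μ)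
    (hlaw : ∀ i, Measure.map (Y i) μ = volume.withDensity (fun y => ENNReal.ofReal (f y))) :
    μ {ω | C + α ≤ ⨆ x : ℝ,
        (∑ i : Fin N, if |Y i ω - x| ≤ ε then (1 : ℝ) else 0) / N / (2 * ε)}
      ≤ ENNReal.ofReal
          ((4 * C * N * (ε * α) / lam + 2 + N * ∫ y : ℝ, Real.exp (lam * |y|) * f y)
            * Real.exp (-2 * N * (ε * α) ^ 2)) :=
  stmt_14_general μ N ε α lam hε hα hlam f hf_nonneg C hC hfC hint Y hmeas hindep hlaw
end
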